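/- arXiv:2407.02615 — 8 statements merged into one kernel-verified Lean document; each statement's English description precedes it below -/
import Mathlib

section
/- Let M be a monoid equipped with a linear order that is a well-order and strictly compatible with multiplication on both sides. Then for every a ∈ M there are only finitely many finite lists (a_1, …, a_n), n ≥ 0, of elements of M \ {1} with a_1 ⋯ a_n = a; that is, for each a ∈ M the set of lists l of elements of M with all entries different from 1 and product equal to a is finite. -/
/-! By Higman's lemma, lists over the well-quasi-ordered alphabet `M` are well-quasi-ordered by
"pointwise `≤` into a sublist". In a strictly ordered monoid all elements are `≥ 1`, so on lists
with no factor `1` the product is strictly monotone for this order. The factorizations of a fixed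
`a` therefore form an antichain, which must be finite. -/

section OneLe

variable {M : Type*} [Monoid M] [LinearOrder M] [MulLeftStrictMono M] [WellFoundedLT M]

/-- If `x < 1` then `x * x < x`, so a well-founded strict order has no elements below `1`. -/
theorem one_le_of_wellFoundedLT (x : M) : 1 ≤ x := by
  induction x using WellFoundedLT.induction with
  | _ x ih =>
    by_contra! hx
    have hxx : x * x < x := mul_lt_of_lt_one_right' x hx
    exact (ih _ hxx).not_gt (hxx.trans hx)

end OneLe

namespace List

variable {M : Type*} [Monoid M] [PartialOrder M] [MulLeftStrictMono M] [MulRightStrictMono M]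
  [MulLeftMono M] [MulRightMono M]

theorem Forall₂.prod_lt_prod' {l₁ l₂ : List M} (h : Forall₂ (· ≤ ·) l₁ l₂) (hne : l₁ ≠ l₂) :
    l₁.prod < l₂.prod := by
  induction h with
  | nil => exact absurd rfl hne
  | cons hab h ih =>
    simp only [prod_cons]
    rcases hab.lt_or_eq with hab | rfl
    · exact mul_lt_mul_of_lt_of_le hab h.prod_le_prod'
    · exact mul_lt_mul_right (ih (by simpa using hne)) _

theorem Sublist.prod_lt_prod' {l₁ l₂ : List M} (h : l₁ <+ l₂) (hne : l₁ ≠ l₂)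
    (h₁ : ∀ a ∈ l₂, 1 < a) : l₁.prod < l₂.prod := by
  induction h with
  | slnil => exact absurd rfl hne
  | cons a h _ =>
    simp only [prod_cons, forall_mem_cons] at h₁ ⊢
    exact (h.prod_le_prod' fun x hx => (h₁.2 x hx).le).trans_lt (lt_mul_of_one_lt_left' _ h₁.1)
  | cons_cons a _ ih =>
    simp only [prod_cons, forall_mem_cons] at h₁ ⊢
    exact mul_lt_mul_right (ih (by simpa using hne) h₁.2) a

theorem SublistForall₂.prod_lt_prod' {l₁ l₂ : List M} (h : SublistForall₂ (· ≤ ·) l₁ l₂)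
    (hne : l₁ ≠ l₂) (h₁ : ∀ a ∈ l₂, 1 < a) : l₁.prod < l₂.prod := by
  obtain ⟨l, hall, hsub⟩ := sublistForall₂_iff.1 h
  by_cases hl : l₁ = l
  · subst hl
    exact hsub.prod_lt_prod' hne h₁
  · exact (hall.prod_lt_prod' hl).trans_le (hsub.prod_le_prod' fun a ha => (h₁ a ha).le)

end List

theorem List.finite_setOf_prod_eq {M : Type*} [Monoid M] [LinearOrder M] [MulLeftStrictMono M]
    [MulRightStrictMono M] [WellFoundedLT M] (a : M) :
    {l : List M | (∀ x ∈ l, x ≠ 1) ∧ l.prod = a}.Finite := by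
  have := mulLeftMono_of_mulLeftStrictMono M
  have := mulRightMono_of_mulRightStrictMono M
  refine IsAntichain.finite_of_partiallyWellOrderedOn (r := List.SublistForall₂ (· ≤ ·)) ?_ ?_
  · rintro l₁ ⟨-, rfl⟩ l₂ ⟨h₂, hprod⟩ hne hsub
    exact (hsub.prod_lt_prod' hne fun x hx =>
      (one_le_of_wellFoundedLT x).lt_of_ne' (h₂ x hx)).ne hprod.symm
  · exact ((Set.IsPWO.of_linearOrder Set.univ).partiallyWellOrderedOn_sublistForall₂ _).mono
      fun _ _ _ _ => trivial

/-- In a monoid with a linear order that is a well-order and strictly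
compatible with multiplication on both sides, every element `a` has only finitely many
representations `a = a₁ ⋯ aₙ` (n ≥ 0) with all factors different from `1`. -/
theorem stmt1 {M : Type*} [Monoid M] [LinearOrder M]
    (hwo : ∀ s : Set M, s.Nonempty → ∃ m ∈ s, ∀ x ∈ s, m ≤ x)
    (hmul : ∀ a b c : M, a < b → a * c < b * c ∧ c * a < c * b)
    (a : M) :
    {l : List M | (∀ x ∈ l, x ≠ 1) ∧ l.prod = a}.Finite := by
  have : WellFoundedLT M := ⟨WellFounded.wellFounded_iff_has_min.2 fun s hs =>
    let ⟨m, hm, hle⟩ := hwo s hs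
    ⟨m, hm, fun x hx => (hle x hx).not_gt⟩⟩
  have : MulLeftStrictMono M := ⟨fun c _ _ h => (hmul _ _ c h).2⟩
  have : MulRightStrictMono M := ⟨fun c _ _ h => (hmul _ _ c h).1⟩
  exact List.finite_setOf_prod_eq a
end

section
/- Let S be a semiring equipped with a linear order such that for all a, b, c ∈ S with a < b one has a + c < b + c; if c > 0 then ac < bc and ca < cb; and if c < 0 then ac > bc and ca > cb. Let M be a monoid equipped with a linear order strictly compatible with multiplication on both sides (a < b implies ac < bc and ca < cb). Then the monoid semiring S[M] (finitely supported functions M → S with pointwise addition and convolution product, i.e., MonoidAlgebra S M) admits a linear order with the same three properties (addition is strictly monotone, multiplication by positive elements is strictly monotone, multiplication by negative elements strictly reverses the order). -/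
/-!
Order `S[M]` colexicographically: `f < g` when the coefficients of `f` and `g` agree above some
`m` and `f m < g m`. Write `f = p + x`, `g = p + y` with `x`, `y` vanishing above `m`. If `h`
vanishes above `m₀`, then `x * h` and `y * h` vanish above `m * m₀`, and since by strict
monotonicity of `M` a product `i * j` with `i ≤ m`, `j ≤ m₀` equals `m * m₀` only for `i = m`,
`j = m₀`, their coefficients at `m * m₀` are `f m * h m₀` and `g m * h m₀`. So comparing `f * h`
with `g * h` reduces to comparing these two products in `S`, where the hypotheses on `S` apply.
-/

namespace MonoidAlgebra

variable {S M : Type*} [Semiring S]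

section VanishingAbove

variable [LinearOrder M]

theorem exists_add_eq_of_coeff_eq_of_lt {f g : MonoidAlgebra S M} {m : M}
    (hfg : ∀ j, m < j → f.coeff j = g.coeff j) :
    ∃ p x y : MonoidAlgebra S M, f = p + x ∧ g = p + y ∧
      (∀ i, m < i → x.coeff i = 0) ∧ (∀ i, m < i → y.coeff i = 0) ∧
      x.coeff m = f.coeff m ∧ y.coeff m = g.coeff m := by
  classical
  have hupper : f.coeff.filter (m < ·) = g.coeff.filter (m < ·) := by
    ext j
    simp only [Finsupp.filter_apply]
    split_ifs with hj
    exacts [hfg j hj, rfl]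
  refine ⟨ofCoeff (f.coeff.filter (m < ·)), ofCoeff (f.coeff.filter (¬ m < ·)),
    ofCoeff (g.coeff.filter (¬ m < ·)), ?_, ?_, ?_, ?_, ?_, ?_⟩
  · rw [← ofCoeff_add, Finsupp.filter_add_filter_not, ofCoeff_coeff]
  · rw [hupper, ← ofCoeff_add, Finsupp.filter_add_filter_not, ofCoeff_coeff]
  · exact fun i hi => Finsupp.filter_apply_neg _ _ (not_not.2 hi)
  · exact fun i hi => Finsupp.filter_apply_neg _ _ (not_not.2 hi)
  · exact Finsupp.filter_apply_pos _ _ (lt_irrefl m)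
  · exact Finsupp.filter_apply_pos _ _ (lt_irrefl m)

theorem le_of_mem_support {x : MonoidAlgebra S M} {a : M} (hx : ∀ i, a < i → x.coeff i = 0)
    {i : M} (hi : i ∈ x.coeff.support) : i ≤ a :=
  not_lt.1 fun h => Finsupp.mem_support_iff.1 hi (hx i h)

end VanishingAbove

section LeadingTerm

variable [Mul M] [LinearOrder M] [MulLeftStrictMono M] [MulRightStrictMono M]

theorem coeff_mul_eq_zero_of_lt {x y : MonoidAlgebra S M} {a b : M}
    (hx : ∀ i, a < i → x.coeff i = 0) (hy : ∀ j, b < j → y.coeff j = 0) {n : M} (hn : a * b < n) :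
    (x * y).coeff n = 0 := by
  classical
  have := mulLeftMono_of_mulLeftStrictMono M
  have := mulRightMono_of_mulRightStrictMono M
  refine Finsupp.notMem_support_iff.1 fun hmem => hn.not_ge ?_
  obtain ⟨i, hi, j, hj, rfl⟩ := Finset.mem_mul.1 (support_coeff_mul_subset x y hmem)
  exact mul_le_mul' (le_of_mem_support hx hi) (le_of_mem_support hy hj)

theorem coeff_mul_mul_of_eq_zero_of_lt {x y : MonoidAlgebra S M} {a b : M}
    (hx : ∀ i, a < i → x.coeff i = 0) (hy : ∀ j, b < j → y.coeff j = 0) :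
    (x * y).coeff (a * b) = x.coeff a * y.coeff b := by
  have := mulLeftMono_of_mulLeftStrictMono M
  have := mulRightMono_of_mulRightStrictMono M
  refine coeff_mul_mul_of_uniqueMul fun i j hi hj hij => ?_
  have hia := le_of_mem_support hx hi
  have hjb := le_of_mem_support hy hj
  refine ⟨hia.eq_of_not_lt fun h => ?_, hjb.eq_of_not_lt fun h => ?_⟩
  · exact (mul_lt_mul_of_lt_of_le h hjb).ne hij
  · exact (mul_lt_mul_of_le_of_lt hia h).ne hij

end LeadingTerm

section Colex

variable [LinearOrder S] [LinearOrder M]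

abbrev colexOrder : LinearOrder (MonoidAlgebra S M) :=
  LinearOrder.lift' (fun f => toColex f.coeff) (toColex.injective.comp coeff_injective)

theorem colexOrder_lt_iff {f g : MonoidAlgebra S M} :
    colexOrder.lt f g ↔ ∃ i, (∀ j, i < j → f.coeff j = g.coeff j) ∧ f.coeff i < g.coeff i :=
  Iff.rfl

theorem colexOrder_add_lt_add_right [AddRightStrictMono S] {f g : MonoidAlgebra S M}
    (h : colexOrder.lt f g) (p : MonoidAlgebra S M) : colexOrder.lt (f + p) (g + p) :=
  add_lt_add_left (α := Colex (M →₀ S)) h (toColex p.coeff)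

theorem colexOrder_add_lt_add_of_eq_zero_of_lt [AddLeftStrictMono S] {x y : MonoidAlgebra S M}
    {n : M} (hx : ∀ i, n < i → x.coeff i = 0) (hy : ∀ i, n < i → y.coeff i = 0)
    (hlt : x.coeff n < y.coeff n) (p : MonoidAlgebra S M) :
    colexOrder.lt (p + x) (p + y) :=
  add_lt_add_right (α := Colex (M →₀ S))
    (colexOrder_lt_iff.2 ⟨n, fun i hi => by rw [hx i hi, hy i hi], hlt⟩) (toColex p.coeff)

variable [Mul M] [MulLeftStrictMono M] [MulRightStrictMono M] [AddLeftStrictMono S]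

theorem colexOrder_mul_lt_mul_right {f g h : MonoidAlgebra S M} {m m₀ : M}
    (hfg : ∀ j, m < j → f.coeff j = g.coeff j) (hh : ∀ j, m₀ < j → h.coeff j = 0)
    (hlt : f.coeff m * h.coeff m₀ < g.coeff m * h.coeff m₀) :
    colexOrder.lt (f * h) (g * h) := by
  obtain ⟨p, x, y, rfl, rfl, hx, hy, hxm, hym⟩ := exists_add_eq_of_coeff_eq_of_lt hfg
  rw [add_mul, add_mul]
  refine colexOrder_add_lt_add_of_eq_zero_of_lt (fun n hn => coeff_mul_eq_zero_of_lt hx hh hn)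
    (fun n hn => coeff_mul_eq_zero_of_lt hy hh hn) ?_ _
  rwa [coeff_mul_mul_of_eq_zero_of_lt hx hh, coeff_mul_mul_of_eq_zero_of_lt hy hh, hxm, hym]

theorem colexOrder_mul_lt_mul_left {f g h : MonoidAlgebra S M} {m m₀ : M}
    (hfg : ∀ j, m < j → f.coeff j = g.coeff j) (hh : ∀ j, m₀ < j → h.coeff j = 0)
    (hlt : h.coeff m₀ * f.coeff m < h.coeff m₀ * g.coeff m) :
    colexOrder.lt (h * f) (h * g) := by
  obtain ⟨p, x, y, rfl, rfl, hx, hy, hxm, hym⟩ := exists_add_eq_of_coeff_eq_of_lt hfg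
  rw [mul_add, mul_add]
  refine colexOrder_add_lt_add_of_eq_zero_of_lt (fun n hn => coeff_mul_eq_zero_of_lt hh hx hn)
    (fun n hn => coeff_mul_eq_zero_of_lt hh hy hn) ?_ _
  rwa [coeff_mul_mul_of_eq_zero_of_lt hh hx, coeff_mul_mul_of_eq_zero_of_lt hh hy, hxm, hym]

end Colex

end MonoidAlgebra

open MonoidAlgebra

/-- If `S` is a strictly ordered semiring and `M` a strictly ordered monoid,
then the monoid semiring `S[M] = MonoidAlgebra S M` admits a linear order making it a
strictly ordered semiring: addition is strictly monotone, multiplication by positive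
elements is strictly monotone on both sides, and multiplication by negative elements
strictly reverses the order on both sides. -/
theorem stmt3 {S M : Type*} [Semiring S] [LinearOrder S] [Monoid M] [LinearOrder M]
    (hadd : ∀ a b c : S, a < b → a + c < b + c)
    (hposR : ∀ a b c : S, a < b → 0 < c → a * c < b * c)
    (hposL : ∀ a b c : S, a < b → 0 < c → c * a < c * b)
    (hnegR : ∀ a b c : S, a < b → c < 0 → b * c < a * c)
    (hnegL : ∀ a b c : S, a < b → c < 0 → c * b < c * a)
    (hM : ∀ a b c : M, a < b → a * c < b * c ∧ c * a < c * b) :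
    ∃ lo : LinearOrder (MonoidAlgebra S M),
      (∀ f g h : MonoidAlgebra S M, lo.lt f g → lo.lt (f + h) (g + h)) ∧
      (∀ f g h : MonoidAlgebra S M, lo.lt f g → lo.lt 0 h →
        lo.lt (f * h) (g * h) ∧ lo.lt (h * f) (h * g)) ∧
      (∀ f g h : MonoidAlgebra S M, lo.lt f g → lo.lt h 0 →
        lo.lt (g * h) (f * h) ∧ lo.lt (h * g) (h * f)) := by
  have : MulLeftStrictMono M := ⟨fun c _ _ h => (hM _ _ c h).2⟩
  have : MulRightStrictMono M := ⟨fun c _ _ h => (hM _ _ c h).1⟩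
  have : AddRightStrictMono S := ⟨fun c _ _ h => hadd _ _ c h⟩
  have : AddLeftStrictMono S := ⟨fun c a b h => by simpa only [add_comm c] using hadd a b c h⟩
  refine ⟨colexOrder, fun f g h hfg => colexOrder_add_lt_add_right hfg h, ?_, ?_⟩
  · intro f g h hfg hh
    obtain ⟨m, hfg, hlt⟩ := colexOrder_lt_iff.1 hfg
    obtain ⟨m₀, hh, hpos⟩ := colexOrder_lt_iff.1 hh
    simp only [coeff_zero, Finsupp.coe_zero, Pi.zero_apply] at hh hpos
    exact ⟨colexOrder_mul_lt_mul_right hfg (fun j hj => (hh j hj).symm) (hposR _ _ _ hlt hpos),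
      colexOrder_mul_lt_mul_left hfg (fun j hj => (hh j hj).symm) (hposL _ _ _ hlt hpos)⟩
  · intro f g h hfg hh
    obtain ⟨m, hfg, hlt⟩ := colexOrder_lt_iff.1 hfg
    obtain ⟨m₀, hh, hneg⟩ := colexOrder_lt_iff.1 hh
    simp only [coeff_zero, Finsupp.coe_zero, Pi.zero_apply] at hh hneg
    exact ⟨colexOrder_mul_lt_mul_right (fun j hj => (hfg j hj).symm) hh (hnegR _ _ _ hlt hneg),
      colexOrder_mul_lt_mul_left (fun j hj => (hfg j hj).symm) hh (hnegL _ _ _ hlt hneg)⟩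
end

section
/- Let X and Y be (possibly empty) sets. Then the monoid M = [Y] ∗ ⟨X⟩, the monoid coproduct of the free commutative monoid [Y] on Y and the free monoid ⟨X⟩ on X, admits a linear order that is a well-order and strictly compatible with multiplication on both sides: a < b implies ac < bc and ca < cb for all c ∈ M. -/
/-!
Every element of `A ∗ FreeMonoid X` has a unique normal form `a₁ x₁ ⋯ aₙ xₙ a` with `aᵢ, a ∈ A`
and `xᵢ ∈ X`, and multiplying two normal forms only merges the tail of the first with the
leading coefficient of the second. Given a strictly well-ordered monoid `A` (for `A = [Y]`, the
lexicographic monomial order) and a well-order on `X`, order normal forms by `n`, then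
lexicographically by the letters `(aᵢ, xᵢ)`, then by the tail `a`. This is a well-order
(shortlex over a well-order), and since a multiplication changes a normal form only at the
merge point, through a strictly monotone operation of `A`, it is strictly compatible with
multiplication on both sides.
-/

/-- A monoid is strictly well-ordered if it admits a linear order that is a well-order
(every nonempty subset has a least element) and strictly compatible with multiplication
on both sides. -/
def IsStrictWellOrderedMonoid (M : Type*) [Monoid M] : Prop :=
  ∃ lo : LinearOrder M,
    (∀ s : Set M, s.Nonempty → ∃ m ∈ s, ∀ x ∈ s, lo.le m x) ∧
    (∀ a b c : M, lo.lt a b → lo.lt (a * c) (b * c) ∧ lo.lt (c * a) (c * b))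

open List
open scoped Monoid.Coprod

theorem List.Lex.append_of_length_eq {α : Type*} {r : α → α → Prop} {s₁ s₂ : List α}
    (h : Lex r s₁ s₂) (hlen : s₁.length = s₂.length) (t₁ t₂ : List α) :
    Lex r (s₁ ++ t₁) (s₂ ++ t₂) := by
  induction h with
  | nil => simp at hlen
  | cons _ ih => exact .cons (ih (by simpa using hlen))
  | rel h => exact .rel h

theorem List.Shortlex.append_of_length_eq {α : Type*} {r : α → α → Prop} {s₁ s₂ t₁ t₂ : List α}
    (h : Shortlex r s₁ s₂) (ht : t₁.length = t₂.length) : Shortlex r (s₁ ++ t₁) (s₂ ++ t₂) := by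
  rcases shortlex_def.mp h with hlen | ⟨hlen, hlex⟩
  · exact .of_length_lt (by simp [ht, hlen])
  · exact .of_lex (by simp [ht, hlen]) (hlex.append_of_length_eq hlen t₁ t₂)

theorem List.Shortlex.cons_map_head {α : Type*} {r : α → α → Prop} {f : α → α}
    (hf : ∀ a b, r a b → r (f a) (f b)) {a b : α} {s t : List α}
    (h : Shortlex r (a :: s) (b :: t)) : Shortlex r (f a :: s) (f b :: t) := by
  rcases shortlex_def.mp h with hlen | ⟨hlen, hlex⟩
  · exact .of_length_lt (by simpa using hlen)
  · refine .of_lex (by simpa using hlen) ?_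
    rcases cons_lex_cons_iff.mp hlex with hab | ⟨rfl, hst⟩
    exacts [.rel (hf a b hab), .cons hst]

theorem isStrictWellOrderedMonoid_iff {M : Type*} [Monoid M] :
    IsStrictWellOrderedMonoid M ↔
      ∃ _ : LinearOrder M, WellFoundedLT M ∧ MulLeftStrictMono M ∧ MulRightStrictMono M := by
  constructor
  · rintro ⟨_, hmin, hmono⟩
    refine ⟨_, ⟨WellFounded.wellFounded_iff_has_min.mpr fun s hs => ?_⟩,
      ⟨fun c a b h => (hmono a b c h).2⟩, ⟨fun c a b h => (hmono a b c h).1⟩⟩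
    obtain ⟨m, hm, hle⟩ := hmin s hs
    exact ⟨m, hm, fun x hx => not_lt_of_ge (hle x hx)⟩
  · rintro ⟨_, hwf, _, _⟩
    refine ⟨_, fun s hs => ?_, fun a b c h => ⟨mul_lt_mul_left h c, mul_lt_mul_right h c⟩⟩
    obtain ⟨m, hm, hmin⟩ := hwf.wf.has_min s hs
    exact ⟨m, hm, fun x hx => le_of_not_gt (hmin x hx)⟩

theorem IsStrictWellOrderedMonoid.of_injective {M N : Type*} [Monoid M] [Monoid N]
    (hN : IsStrictWellOrderedMonoid N) (f : M →* N) (hf : Function.Injective f) :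
    IsStrictWellOrderedMonoid M := by
  obtain ⟨_, hwf, _, _⟩ := isStrictWellOrderedMonoid_iff.mp hN
  let _ : LinearOrder M := .lift' f hf
  refine isStrictWellOrderedMonoid_iff.mpr ⟨‹_›, ⟨InvImage.wf f hwf.wf⟩, ⟨fun c a b h => ?_⟩,
    ⟨fun c a b h => ?_⟩⟩
  · change f (c * a) < f (c * b)
    simpa only [map_mul] using mul_lt_mul_right (show f a < f b from h) (f c)
  · change f (a * c) < f (b * c)
    simpa only [map_mul] using mul_lt_mul_left (show f a < f b from h) (f c)

theorem MonomialOrder.isStrictWellOrderedMonoid {σ : Type*} (m : MonomialOrder σ) :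
    IsStrictWellOrderedMonoid (Multiplicative (σ →₀ ℕ)) :=
  (isStrictWellOrderedMonoid_iff.mpr ⟨inferInstance, inferInstanceAs (WellFoundedLT m.syn),
      inferInstance, inferInstance⟩ : IsStrictWellOrderedMonoid (Multiplicative m.syn)).of_injective
    m.toSyn.toMultiplicative.toMonoidHom m.toSyn.toMultiplicative.injective

namespace CoprodFreeMonoid

/-- `⟨[(a₁, x₁), …, (aₙ, xₙ)], a⟩` stands for `a₁ x₁ ⋯ aₙ xₙ a`, the normal form of an
element of `A ∗ FreeMonoid X`. -/
@[ext]
structure Word (A X : Type*) where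
  letters : List (A × X)
  tail : A

namespace Word

variable {A X : Type*}

def prepend (l : List (A × X)) (w : Word A X) : Word A X := ⟨l ++ w.letters, w.tail⟩

@[simp] theorem letters_prepend (l : List (A × X)) (w : Word A X) :
    (prepend l w).letters = l ++ w.letters := rfl

@[simp] theorem tail_prepend (l : List (A × X)) (w : Word A X) :
    (prepend l w).tail = w.tail := rfl

@[simp] theorem prepend_nil (w : Word A X) : prepend [] w = w := rfl

section Monoid

variable [Monoid A]

instance : SMul A (Word A X) where
  smul c
    | ⟨[], d⟩ => ⟨[], c * d⟩
    | ⟨(e, x) :: l, d⟩ => ⟨(c * e, x) :: l, d⟩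

@[simp] theorem smul_nil (c d : A) : c • (⟨[], d⟩ : Word A X) = ⟨[], c * d⟩ := rfl

@[simp] theorem smul_cons (c e : A) (x : X) (l : List (A × X)) (d : A) :
    c • (⟨(e, x) :: l, d⟩ : Word A X) = ⟨(c * e, x) :: l, d⟩ := rfl

@[simp] theorem length_letters_smul (c : A) (w : Word A X) :
    (c • w).letters.length = w.letters.length := by
  obtain ⟨_ | ⟨⟨e, x⟩, l⟩, d⟩ := w <;> rfl

instance : MulAction A (Word A X) where
  one_smul w := by obtain ⟨_ | ⟨⟨e, x⟩, l⟩, d⟩ := w <;> simp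
  mul_smul c c' w := by obtain ⟨_ | ⟨⟨e, x⟩, l⟩, d⟩ := w <;> simp [mul_assoc]

instance : One (Word A X) := ⟨⟨[], 1⟩⟩

instance : Mul (Word A X) := ⟨fun v w => prepend v.letters (v.tail • w)⟩

theorem one_def : (1 : Word A X) = ⟨[], 1⟩ := rfl

theorem mul_def (v w : Word A X) : v * w = prepend v.letters (v.tail • w) := rfl

theorem prepend_mul (l : List (A × X)) (v w : Word A X) :
    prepend l v * w = prepend l (v * w) := by
  simp [mul_def, prepend]

instance : IsScalarTower A (Word A X) (Word A X) where
  smul_assoc c v w := by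
    obtain ⟨_ | ⟨⟨e, x⟩, l⟩, d⟩ := v
    · simp [smul_eq_mul, mul_def, mul_smul]
    · simp [smul_eq_mul, mul_def, prepend]

instance : Monoid (Word A X) where
  mul_assoc u v w := by rw [mul_def u, prepend_mul, smul_mul_assoc, ← mul_def]
  one_mul w := by rw [mul_def, one_def, one_smul, prepend_nil]
  mul_one w := by simp [mul_def, one_def, prepend]

end Monoid

section Order

def lexLetters (w : Word A X) : List (A ×ₗ X) := w.letters.map toLex

theorem lexLetters_inj {v w : Word A X} :
    v.lexLetters = w.lexLetters ↔ v.letters = w.letters :=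
  (List.map_injective_iff.mpr toLex.injective).eq_iff

def key (w : Word A X) : (ℕ ×ₗ List (A ×ₗ X)) ×ₗ A :=
  toLex (toLex (w.lexLetters.length, w.lexLetters), w.tail)

theorem key_injective : Function.Injective (key : Word A X → _) := by
  intro v w h
  simp only [key, toLex_inj, Prod.mk.injEq] at h
  exact Word.ext (lexLetters_inj.mp h.1.2) h.2

@[simp] theorem lexLetters_prepend (l : List (A × X)) (w : Word A X) :
    (prepend l w).lexLetters = l.map toLex ++ w.lexLetters :=
  List.map_append ..

variable [LinearOrder A] [LinearOrder X]

instance : LinearOrder (Word A X) := .lift' key key_injective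

theorem lt_iff {v w : Word A X} :
    v < w ↔ Shortlex (· < ·) v.lexLetters w.lexLetters ∨
      v.letters = w.letters ∧ v.tail < w.tail := by
  change key v < key w ↔ _
  simp only [key, Prod.Lex.toLex_lt_toLex, toLex_inj, Prod.mk.injEq, shortlex_def, lex_lt,
    ← lexLetters_inj, and_iff_right_of_imp (congrArg length)]

instance [WellFoundedLT A] [WellFoundedLT X] : WellFoundedLT (Word A X) := by
  refine ⟨Subrelation.wf (fun h => ?_) (InvImage.wf (fun w : Word A X => (w.lexLetters, w.tail))
    ((Shortlex.wf wellFounded_lt).prod_lex wellFounded_lt))⟩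
  exact Prod.lex_def.mpr ((lt_iff.mp h).imp_right (And.imp_left lexLetters_inj.mpr))

theorem prepend_lt_prepend (l : List (A × X)) {v w : Word A X} (h : v < w) :
    prepend l v < prepend l w := by
  rw [lt_iff] at h ⊢
  simpa only [lexLetters_prepend, letters_prepend, List.append_cancel_left_eq, tail_prepend]
    using h.imp_left (·.append_left (l.map toLex))

theorem prepend_lt_prepend_of_shortlex {l l' : List (A × X)}
    (h : Shortlex (· < ·) (l.map toLex) (l'.map toLex)) {v w : Word A X}
    (hvw : v.letters.length = w.letters.length) : prepend l v < prepend l' w :=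
  lt_iff.mpr <| .inl <| by
    simpa using h.append_of_length_eq (by simpa [lexLetters] using hvw)

theorem smul_strictMono_left [Monoid A] [MulRightStrictMono A] (w : Word A X) :
    StrictMono fun c : A => c • w := by
  intro c c' h
  obtain ⟨_ | ⟨⟨e, x⟩, l⟩, d⟩ := w
  · exact lt_iff.mpr (.inr ⟨rfl, mul_lt_mul_left h d⟩)
  · exact lt_iff.mpr (.inl (.of_lex rfl (.rel (Prod.Lex.toLex_lt_toLex.mpr
      (.inl (mul_lt_mul_left h e))))))

theorem smul_strictMono_right [Monoid A] [MulLeftStrictMono A] (c : A) :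
    StrictMono fun w : Word A X => c • w := by
  have mul_fst_strictMono : ∀ p q : A ×ₗ X, p < q →
      toLex (c * (ofLex p).1, (ofLex p).2) < toLex (c * (ofLex q).1, (ofLex q).2) :=
    fun p q hpq => Prod.Lex.toLex_lt_toLex.mpr <| (Prod.Lex.lt_iff.mp hpq).imp
      (mul_lt_mul_right · c) fun h => ⟨congrArg (c * ·) h.1, h.2⟩
  intro v w h
  rw [lt_iff] at h ⊢
  obtain ⟨_ | ⟨⟨e, x⟩, l⟩, d⟩ := v <;> obtain ⟨_ | ⟨⟨e', x'⟩, l'⟩, d'⟩ := w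
  · exact .inr ⟨rfl, mul_lt_mul_right (by simpa [lexLetters] using h) c⟩
  · exact .inl (.of_length_lt (by simp [lexLetters]))
  · simp [lexLetters, not_shortlex_nil_right] at h
  · rcases h with h | ⟨hl, hd⟩
    · exact .inl (h.cons_map_head mul_fst_strictMono)
    · simp only [List.cons.injEq, Prod.mk.injEq] at hl
      obtain ⟨⟨rfl, rfl⟩, rfl⟩ := hl
      exact .inr ⟨rfl, hd⟩

instance [Monoid A] [MulLeftStrictMono A] : MulLeftStrictMono (Word A X) :=
  ⟨fun u _ _ h => prepend_lt_prepend u.letters (smul_strictMono_right u.tail h)⟩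

instance [Monoid A] [MulRightStrictMono A] : MulRightStrictMono (Word A X) := by
  refine ⟨fun w u v h => ?_⟩
  change u * w < v * w
  rcases lt_iff.mp h with h | ⟨hl, ht⟩
  · exact prepend_lt_prepend_of_shortlex h (by simp)
  · rw [mul_def, mul_def, hl]
    exact prepend_lt_prepend _ (smul_strictMono_left w ht)

end Order

section Coprod

variable [Monoid A]

def ofLetter (p : A × X) : A ∗ FreeMonoid X := .inl p.1 * .inr (.of p.2)

def eval : Word A X →* A ∗ FreeMonoid X where
  toFun w := (w.letters.map ofLetter).prod * .inl w.tail
  map_one' := by simp [one_def]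
  map_mul' v w := by
    have eval_smul : ∀ c : A, ((c • w).letters.map ofLetter).prod * .inl (c • w).tail =
        .inl c * ((w.letters.map ofLetter).prod * .inl w.tail) := by
      obtain ⟨_ | ⟨⟨e, x⟩, l⟩, d⟩ := w <;> simp [ofLetter, mul_assoc]
    simp only [mul_def, letters_prepend, tail_prepend, List.map_append, List.prod_append,
      mul_assoc, eval_smul]

def ofCoprod : A ∗ FreeMonoid X →* Word A X :=
  Monoid.Coprod.lift ⟨⟨fun a => ⟨[], a⟩, rfl⟩, fun _ _ => rfl⟩
    (FreeMonoid.lift fun x => ⟨[(1, x)], 1⟩)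

theorem eval_comp_ofCoprod : (eval.comp ofCoprod : A ∗ FreeMonoid X →* _) = .id _ :=
  Monoid.Coprod.hom_ext (MonoidHom.ext fun a => one_mul (Monoid.Coprod.inl a))
    (FreeMonoid.hom_eq fun x => by simp [ofCoprod, eval, ofLetter])

theorem ofCoprod_injective : Function.Injective (ofCoprod : A ∗ FreeMonoid X → Word A X) :=
  Function.LeftInverse.injective (g := eval) (DFunLike.congr_fun eval_comp_ofCoprod)

end Coprod

end Word

end CoprodFreeMonoid

open CoprodFreeMonoid in
theorem IsStrictWellOrderedMonoid.coprod_freeMonoid {A : Type*} [Monoid A]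
    (hA : IsStrictWellOrderedMonoid A) (X : Type*) :
    IsStrictWellOrderedMonoid (A ∗ FreeMonoid X) := by
  obtain ⟨_, _, _, _⟩ := isStrictWellOrderedMonoid_iff.mp hA
  obtain ⟨_, _⟩ := exists_wellFoundedLT X
  exact (isStrictWellOrderedMonoid_iff.mpr ⟨_, inferInstance, inferInstance, inferInstance⟩ :
    IsStrictWellOrderedMonoid (Word A X)).of_injective Word.ofCoprod Word.ofCoprod_injective

/-- For any (possibly empty) sets `X` and `Y`, the monoid coproduct
`[Y] ∗ ⟨X⟩` of the free commutative monoid on `Y` and the free monoid on `X` admits a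
linear order that is a well-order and strictly compatible with multiplication on both
sides. -/
theorem stmt8 (X Y : Type*) :
    IsStrictWellOrderedMonoid (Monoid.Coprod (Multiplicative (Y →₀ ℕ)) (FreeMonoid X)) := by
  obtain ⟨_, _⟩ := exists_wellFoundedGT Y
  exact (MonomialOrder.lex (σ := Y)).isStrictWellOrderedMonoid.coprod_freeMonoid X
end

section
/- Let X and Y be (possibly empty) sets and let M = [Y] ∗ ⟨X⟩ be the monoid coproduct of the free commutative monoid on Y and the free monoid on X. Then in the monoid semiring ℕ[M] (MonoidAlgebra ℕ M): (1) multiplication by nonzero elements is cancellative, i.e., for f, g, h ∈ ℕ[M] with h ≠ 0, fh = gh implies f = g and hf = hg implies f = g; and (2) roots are unique, i.e., if f^n = g^n for some integer n ≥ 1 then f = g. -/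
/-!
Order the monoid `M` so that multiplication is strictly monotone on both sides. Then `ℕ[M]` is
cancellative (`M` has unique products), and `ℤ[M]`, ordered lexicographically by coefficients
starting from the lowest monomial, is a strictly ordered ring in which the images of `f` and `g`
are nonnegative; there `f ^ n = g ^ n` forces `f = g`.

The order on `M` comes from the Magnus embedding `x₁ ⋯ xₖ ↦ (1 + x₁) ⋯ (1 + xₖ)` (for generators
`xᵢ`) of `M` into the multiplicative monoid of `ℤ[M]`. It is injective because `m` is the unique
term of top degree of its image. Order `ℤ[M]` lexicographically with respect to any order on `M`
refining the degree: multiplying by an element `1 + (terms of positive degree)` does not change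
the lowest term of a difference, so the order pulled back to `M` is bi-invariant.
-/

open Function

theorem exists_linearOrder_monotone {N D : Type*} [LinearOrder D] (d : N → D) :
    ∃ _ : LinearOrder N, Monotone d := by
  let := IsWellOrder.linearOrder (WellOrderingRel (α := N))
  exact ⟨LinearOrder.lift' (fun m ↦ toLex (d m, m)) fun a b h ↦ congrArg (fun p ↦ (ofLex p).2) h,
    fun a b hab ↦ Prod.Lex.monotone_fst _ _ hab⟩

namespace MonoidAlgebra

variable {R N D : Type*}

section Lex

variable [Semiring R] [LinearOrder N]

theorem le_of_mem_support_of_forall_lt {x : R[N]} {j : N} (hj : ∀ q < j, x.coeff q = 0) {u : N}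
    (hu : u ∈ x.coeff.support) : j ≤ u :=
  not_lt.1 fun h ↦ Finsupp.mem_support_iff.1 hu (hj u h)

variable [LinearOrder R]

noncomputable abbrev lexLinearOrder : LinearOrder R[N] :=
  LinearOrder.lift' (fun x ↦ toLex x.coeff) (toLex.injective.comp coeff_injective)

attribute [local instance] lexLinearOrder

theorem lex_isOrderedCancelAddMonoid [IsOrderedCancelAddMonoid R] :
    IsOrderedCancelAddMonoid R[N] :=
  Injective.isOrderedCancelAddMonoid (fun x : R[N] ↦ toLex x.coeff) (fun _ _ ↦ rfl)
    Iff.rfl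

theorem lex_pos_iff {x : R[N]} : 0 < x ↔ ∃ j, (∀ q < j, x.coeff q = 0) ∧ 0 < x.coeff j := by
  show Finsupp.Lex (· < ·) (· < ·) 0 x.coeff ↔ _
  simp only [Finsupp.lex_def, Finsupp.coe_zero, Pi.zero_apply, eq_comm]

theorem lex_nonneg_of_coeff_nonneg {x : R[N]} (hx : ∀ q, 0 ≤ x.coeff q) : 0 ≤ x :=
  Finsupp.toLex_monotone (α := N) (N := R) (a := 0) (b := x.coeff) hx

end Lex

section BiOrdered

variable {T : Type*} [Monoid T] [LinearOrder T] [MulLeftStrictMono T] [MulRightStrictMono T]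

theorem uniqueProds_of_mulStrictMono : UniqueProds T :=
  have : IsRightCancelMul T := ⟨fun _ ↦ mul_left_strictMono.injective⟩
  inferInstance

section OrderedRing

variable [Ring R] [LinearOrder R] [IsStrictOrderedRing R]

attribute [local instance] lexLinearOrder lex_isOrderedCancelAddMonoid

theorem lex_mul_pos {x y : R[T]} (hx : 0 < x) (hy : 0 < y) : 0 < x * y := by
  classical
  have := mulLeftMono_of_mulLeftStrictMono T
  have := mulRightMono_of_mulRightStrictMono T
  obtain ⟨i, hxi, hi⟩ := lex_pos_iff.1 hx
  obtain ⟨j, hyj, hj⟩ := lex_pos_iff.1 hy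
  have unique : UniqueMul x.coeff.support y.coeff.support i j := by
    intro u v hu hv huv
    have hiu := le_of_mem_support_of_forall_lt hxi hu
    have hjv := le_of_mem_support_of_forall_lt hyj hv
    exact ⟨(hiu.lt_or_eq.resolve_left fun h ↦ (mul_lt_mul_of_lt_of_le h hjv).ne' huv).symm,
      (hjv.lt_or_eq.resolve_left fun h ↦ (mul_lt_mul_of_le_of_lt hiu h).ne' huv).symm⟩
  refine lex_pos_iff.2 ⟨i * j, fun q hq ↦ ?_, ?_⟩
  · by_contra hne
    obtain ⟨u, hu, v, hv, rfl⟩ :=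
      Finset.mem_mul.1 (support_coeff_mul_subset x y (Finsupp.mem_support_iff.2 hne))
    exact (mul_le_mul' (le_of_mem_support_of_forall_lt hxi hu)
      (le_of_mem_support_of_forall_lt hyj hv)).not_gt hq
  · rw [coeff_mul_mul_of_uniqueMul unique]
    exact mul_pos hi hj

theorem lex_isStrictOrderedRing : IsStrictOrderedRing R[T] :=
  have : ZeroLEOneClass R[T] := ⟨lex_nonneg_of_coeff_nonneg fun q ↦ by
    rw [one_def, coeff_single]; exact Finsupp.single_nonneg.2 zero_le_one q⟩
  IsStrictOrderedRing.of_mul_pos fun _ _ ↦ lex_mul_pos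

theorem eq_of_pow_eq_pow_of_coeff_nonneg {f g : R[T]} (hf : ∀ q, 0 ≤ f.coeff q)
    (hg : ∀ q, 0 ≤ g.coeff q) {n : ℕ} (hn : n ≠ 0) (h : f ^ n = g ^ n) : f = g :=
  have := lex_isStrictOrderedRing (R := R) (T := T)
  (pow_left_inj₀ (lex_nonneg_of_coeff_nonneg hf) (lex_nonneg_of_coeff_nonneg hg) hn).1 h

end OrderedRing

theorem eq_of_pow_eq_pow_nat {f g : ℕ[T]} {n : ℕ} (hn : n ≠ 0) (h : f ^ n = g ^ n) : f = g := by
  let ι := mapRingHom T (Nat.castRingHom ℤ)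
  have hι : ∀ x q, 0 ≤ (ι x).coeff q := fun x q ↦ by simp [ι, coeff_mapRingHom]
  refine map_injective _ Nat.cast_injective
    (eq_of_pow_eq_pow_of_coeff_nonneg (hι f) (hι g) hn ?_)
  show ι f ^ n = ι g ^ n
  rw [← map_pow, ← map_pow, h]

end BiOrdered

section TopTerm

variable [Semiring R] [LinearOrder D] (d : N → D)

def HasTopTerm (c : R[N]) (m : N) : Prop :=
  c.coeff m = 1 ∧ ∀ p ∈ c.coeff.support, p ≠ m → d p < d m

abbrev HasBottomTerm (c : R[N]) (m : N) : Prop :=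
  HasTopTerm (OrderDual.toDual ∘ d) c m

variable {d}

theorem HasTopTerm.degree_le {c : R[N]} {m : N} (h : HasTopTerm d c m) {p : N}
    (hp : p ∈ c.coeff.support) : d p ≤ d m := by
  rcases eq_or_ne p m with rfl | hne
  exacts [le_rfl, (h.2 p hp hne).le]

theorem hasTopTerm_one [Monoid N] : HasTopTerm d (1 : R[N]) 1 := by
  classical
  refine ⟨by simp [one_def], fun p hp hne ↦ ?_⟩
  rw [one_def, coeff_single] at hp
  exact absurd (Finset.mem_singleton.1 (Finsupp.support_single_subset hp)) hne

theorem hasTopTerm_single_add_single {a b : N} (hab : d a < d b) :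
    HasTopTerm d (single a 1 + single b 1 : R[N]) b := by
  classical
  have hne : a ≠ b := fun h ↦ hab.ne (congrArg d h)
  refine ⟨by simp [coeff_single, hne], fun p hp hpb ↦ ?_⟩
  have hpa : p = a := by
    by_contra hpa
    simp [coeff_single, Ne.symm hpa, Ne.symm hpb] at hp
  exact hpa ▸ hab

theorem HasTopTerm.mul [Monoid N] [AddCommMonoid D] [IsOrderedCancelAddMonoid D]
    (hd : ∀ a b, d (a * b) = d a + d b) {a b : R[N]} {m n : N}
    (ha : HasTopTerm d a m) (hb : HasTopTerm d b n) : HasTopTerm d (a * b) (m * n) := by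
  classical
  have lt : ∀ u ∈ a.coeff.support, ∀ v ∈ b.coeff.support, ¬(u = m ∧ v = n) →
      d (u * v) < d (m * n) := by
    intro u hu v hv huv
    rw [hd, hd]
    rcases not_and_or.1 huv with hum | hvn
    · exact add_lt_add_of_lt_of_le (ha.2 u hu hum) (hb.degree_le hv)
    · exact add_lt_add_of_le_of_lt (ha.degree_le hu) (hb.2 v hv hvn)
  have unique : UniqueMul a.coeff.support b.coeff.support m n := fun u v hu hv huv ↦
    not_not.1 fun h ↦ (lt u hu v hv h).ne (congrArg d huv)
  refine ⟨by rw [coeff_mul_mul_of_uniqueMul unique, ha.1, hb.1, one_mul], fun p hp hpmn ↦ ?_⟩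
  obtain ⟨u, hu, v, hv, rfl⟩ := Finset.mem_mul.1 (support_coeff_mul_subset a b hp)
  exact lt u hu v hv fun h ↦ hpmn (h.1 ▸ h.2 ▸ rfl)

theorem HasBottomTerm.mul [Monoid N] [AddCommMonoid D] [IsOrderedCancelAddMonoid D]
    (hd : ∀ a b, d (a * b) = d a + d b) {a b : R[N]} {m n : N}
    (ha : HasBottomTerm d a m) (hb : HasBottomTerm d b n) : HasBottomTerm d (a * b) (m * n) :=
  HasTopTerm.mul (d := OrderDual.toDual ∘ d) (fun p q ↦ congrArg OrderDual.toDual (hd p q))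
    ha hb

theorem injective_of_hasTopTerm [Nontrivial R] {φ : N → R[N]}
    (hφ : ∀ m, HasTopTerm d (φ m) m) : Injective φ := by
  intro m n h
  wlog hmn : d n ≤ d m generalizing m n
  · exact (this h.symm (le_of_not_ge hmn)).symm
  have hm : m ∈ (φ n).coeff.support := by
    rw [← h, Finsupp.mem_support_iff, (hφ m).1]; exact one_ne_zero
  by_contra hne
  exact ((hφ n).2 m hm hne).not_ge hmn

end TopTerm

section Degree

variable [Ring R] [Monoid N] [AddCommMonoid D] [LinearOrder D] [IsOrderedCancelAddMonoid D]
  {d : N → D} (hd : ∀ a b, d (a * b) = d a + d b)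
include hd

theorem degree_pos_of_mem_support_sub_one {c : R[N]} (hc : HasBottomTerm d c 1) {p : N}
    (hp : p ∈ (c - 1).coeff.support) : 0 < d p := by
  classical
  have h1 : d 1 = 0 := by simpa using hd 1 1
  have hp1 : p ≠ 1 := by
    rintro rfl
    simp [one_def, hc.1] at hp
  have hcp : p ∈ c.coeff.support := by
    simpa [one_def, coeff_single, hp1] using hp
  simpa [h1] using OrderDual.toDual_lt_toDual.1 (hc.2 p hcp hp1)

theorem coeff_mul_eq_zero_of_degree_le {a b : R[N]} (ha : ∀ p ∈ a.coeff.support, 0 < d p)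
    {k : D} (hb : ∀ v ∈ b.coeff.support, k ≤ d v) {q : N} (hq : d q ≤ k) :
    (a * b).coeff q = 0 ∧ (b * a).coeff q = 0 := by
  classical
  constructor <;> refine Finsupp.notMem_support_iff.1 fun hmem ↦ ?_
  · obtain ⟨u, hu, v, hv, rfl⟩ := Finset.mem_mul.1 (support_coeff_mul_subset _ _ hmem)
    rw [hd] at hq
    exact (lt_add_of_pos_of_le (ha u hu) (hb v hv)).not_ge hq
  · obtain ⟨v, hv, u, hu, rfl⟩ := Finset.mem_mul.1 (support_coeff_mul_subset _ _ hmem)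
    rw [hd] at hq
    exact (lt_add_of_le_of_pos (hb v hv) (ha u hu)).not_ge hq

variable [LinearOrder R] [LinearOrder N]

attribute [local instance] lexLinearOrder lex_isOrderedCancelAddMonoid

theorem lex_pos_mul_of_hasBottomTerm (hmono : Monotone d)
    {c x : R[N]} (hc : HasBottomTerm d c 1) (hx : 0 < x) : 0 < c * x ∧ 0 < x * c := by
  obtain ⟨j, hlow, hpos⟩ := lex_pos_iff.1 hx
  have hdeg : ∀ v ∈ x.coeff.support, d j ≤ d v := fun _ hv ↦
    hmono (le_of_mem_support_of_forall_lt hlow hv)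
  have agree : ∀ q ≤ j, (c * x).coeff q = x.coeff q ∧ (x * c).coeff q = x.coeff q := by
    intro q hq
    obtain ⟨h₁, h₂⟩ := coeff_mul_eq_zero_of_degree_le hd
      (fun p hp ↦ degree_pos_of_mem_support_sub_one hd hc hp) hdeg (hmono hq)
    have hcx : c * x = x + (c - 1) * x := by rw [sub_mul, one_mul, add_sub_cancel]
    have hxc : x * c = x + x * (c - 1) := by rw [mul_sub, mul_one, add_sub_cancel]
    rw [hcx, hxc, coeff_add, coeff_add, Finsupp.add_apply, Finsupp.add_apply, h₁, h₂, add_zero]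
    exact ⟨rfl, rfl⟩
  exact ⟨lex_pos_iff.2 ⟨j, fun q hq ↦ (agree q hq.le).1.trans (hlow q hq),
      (agree j le_rfl).1 ▸ hpos⟩,
    lex_pos_iff.2 ⟨j, fun q hq ↦ (agree q hq.le).2.trans (hlow q hq),
      (agree j le_rfl).2 ▸ hpos⟩⟩

theorem exists_linearOrder_mulStrictMono_of_injective [IsOrderedAddMonoid R] {M : Type*}
    [Monoid M] (hmono : Monotone d) {φ : M →* R[N]} (hφ : Injective φ)
    (h1 : ∀ m, HasBottomTerm d (φ m) 1) :
    ∃ _ : LinearOrder M, MulLeftStrictMono M ∧ MulRightStrictMono M := by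
  refine ⟨LinearOrder.lift' φ hφ, ⟨fun c a b hab ↦ ?_⟩, ⟨fun c a b hab ↦ ?_⟩⟩
  · show φ (c * a) < φ (c * b)
    rw [map_mul, map_mul, ← sub_pos, ← mul_sub]
    exact (lex_pos_mul_of_hasBottomTerm hd hmono (h1 c) (sub_pos.2 hab)).1
  · show φ (a * c) < φ (b * c)
    rw [map_mul, map_mul, ← sub_pos, ← sub_mul]
    exact (lex_pos_mul_of_hasBottomTerm hd hmono (h1 c) (sub_pos.2 hab)).2

end Degree

end MonoidAlgebra

namespace Magnus

open MonoidAlgebra Monoid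

variable {X Y : Type*}

local notation "𝕄" => Monoid.Coprod (Multiplicative (Y →₀ ℕ)) (FreeMonoid X)

noncomputable def degree (m : 𝕄) : ℕ :=
  (Coprod.lift (AddMonoidHom.toMultiplicative Finsupp.degree)
    (FreeMonoid.lift fun _ ↦ Multiplicative.ofAdd 1) m).toAdd

theorem degree_mul (a b : 𝕄) : degree (a * b) = degree a + degree b := by
  simp [degree]

theorem degree_inl_single (y : Y) :
    degree (Coprod.inl (Multiplicative.ofAdd (.single y 1)) : 𝕄) = 1 := by
  simp [degree]

theorem degree_inr_of (x : X) : degree (Coprod.inr (.of x) : 𝕄) = 1 := by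
  simp [degree]

theorem induction_on {P : 𝕄 → Prop} (m : 𝕄) (one : P 1) (mul : ∀ a b, P a → P b → P (a * b))
    (inl : ∀ y, P (Coprod.inl (.ofAdd (.single y 1)))) (inr : ∀ x, P (Coprod.inr (.of x))) :
    P m := by
  induction m using Coprod.induction_on with
  | inl μ =>
    induction μ using Multiplicative.rec with | ofAdd μ
    induction μ using Finsupp.induction_linear with
    | zero => simpa using one
    | add f g hf hg => simpa [ofAdd_add] using mul _ _ hf hg
    | single y n =>
      induction n with
      | zero => simpa using one
      | succ n ih => simpa [Finsupp.single_add, ofAdd_add] using mul _ _ ih (inl y)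
  | inr w =>
    induction w using FreeMonoid.inductionOn' with
    | one => simpa using one
    | of_mul x w ih => simpa using mul _ _ (inr x) ih
  | mul a b ha hb => exact mul a b ha hb

/-- On `[Y]` the map factors through the monoid algebra of `[Y]`, which is commutative, so that
the elements `1 + y` commute. -/
noncomputable def embedding : 𝕄 →* ℤ[𝕄] :=
  Coprod.lift
    ((mapDomainRingHom ℤ Coprod.inl).toMonoidHom.comp <| AddMonoidHom.toMultiplicativeLeft <|
      Finsupp.liftAddHom fun y ↦ multiplesHom _ (.ofMul (1 + single (.ofAdd (.single y 1)) 1)))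
    (FreeMonoid.lift fun x ↦ 1 + single (Coprod.inr (.of x)) 1)

theorem embedding_inl_single (y : Y) :
    embedding (Coprod.inl (.ofAdd (.single y 1)) : 𝕄) =
      single 1 1 + single (Coprod.inl (.ofAdd (.single y 1))) 1 := by
  simp [embedding, mapDomain_add, mapDomain_single, one_def]

theorem embedding_inr_of (x : X) :
    embedding (Coprod.inr (.of x) : 𝕄) = single 1 1 + single (Coprod.inr (.of x)) 1 := by
  simp [embedding, one_def]

theorem embedding_hasTopTerm (m : 𝕄) :
    HasTopTerm degree (embedding m) m ∧ HasBottomTerm degree (embedding m) 1 := by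
  have generator : ∀ g : 𝕄, degree g = 1 → embedding g = single 1 1 + single g 1 →
      HasTopTerm degree (embedding g) g ∧ HasBottomTerm degree (embedding g) 1 := by
    intro g hg hemb
    have hlt : degree (1 : 𝕄) < degree g := by rw [hg]; simp [degree]
    rw [hemb]
    refine ⟨hasTopTerm_single_add_single hlt, ?_⟩
    rw [add_comm]
    exact hasTopTerm_single_add_single (OrderDual.toDual_lt_toDual.2 hlt)
  induction m using induction_on with
  | one => simpa using ⟨hasTopTerm_one, hasTopTerm_one⟩
  | mul a b ha hb =>
    rw [map_mul, ← one_mul (1 : 𝕄)]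
    exact ⟨ha.1.mul degree_mul hb.1, ha.2.mul degree_mul hb.2⟩
  | inl y => exact generator _ (degree_inl_single y) (embedding_inl_single y)
  | inr x => exact generator _ (degree_inr_of x) (embedding_inr_of x)

theorem exists_linearOrder_mulStrictMono :
    ∃ _ : LinearOrder 𝕄, MulLeftStrictMono 𝕄 ∧ MulRightStrictMono 𝕄 := by
  obtain ⟨_, hmono⟩ := exists_linearOrder_monotone (degree (X := X) (Y := Y))
  exact exists_linearOrder_mulStrictMono_of_injective degree_mul hmono
    (injective_of_hasTopTerm fun m ↦ (embedding_hasTopTerm m).1)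
    fun m ↦ (embedding_hasTopTerm m).2

end Magnus

/-- Let `M = [Y] ∗ ⟨X⟩` be the coproduct of the free commutative monoid on
`Y` and the free monoid on `X`. In the monoid semiring `ℕ[M]`, multiplication by nonzero
elements is cancellative on both sides, and roots are unique: `f ^ n = g ^ n` for some
`n ≥ 1` implies `f = g`. -/
theorem stmt9 (X Y : Type*) :
    (∀ f g h : MonoidAlgebra ℕ (Monoid.Coprod (Multiplicative (Y →₀ ℕ)) (FreeMonoid X)),
      h ≠ 0 → (f * h = g * h → f = g) ∧ (h * f = h * g → f = g)) ∧
    (∀ f g : MonoidAlgebra ℕ (Monoid.Coprod (Multiplicative (Y →₀ ℕ)) (FreeMonoid X)),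
      ∀ n : ℕ, 1 ≤ n → f ^ n = g ^ n → f = g) := by
  obtain ⟨_, _, _⟩ := Magnus.exists_linearOrder_mulStrictMono (X := X) (Y := Y)
  have : UniqueProds (Monoid.Coprod (Multiplicative (Y →₀ ℕ)) (FreeMonoid X)) :=
    MonoidAlgebra.uniqueProds_of_mulStrictMono
  exact ⟨fun f g h hh ↦ ⟨mul_right_cancel₀ hh, mul_left_cancel₀ hh⟩,
    fun f g n hn ↦ MonoidAlgebra.eq_of_pow_eq_pow_nat (by omega)⟩
end

section
/- Let X and Y be (possibly empty) sets and let M = [Y] ∗ ⟨X⟩ be the monoid coproduct of the free commutative monoid on Y and the free monoid on X. Then the monoid algebra ℤ[M] (MonoidAlgebra ℤ M) is a domain: it is a nonzero ring in which ab = 0 implies a = 0 or b = 0. -/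
/-!
Every element of `A ∗ FreeMonoid X` is uniquely a word `a₀ x₁ a₁ ⋯ xₙ aₙ` with `aᵢ ∈ A` and
`xᵢ ∈ X`; the normal form is computed by letting the coproduct act on such words
(van der Waerden's trick). If `A` is left cancellative, then in a product `m * n` of normal
forms only `aₙ` of `m` merges with `n`, and it is recovered from the image of `m` in `A`.
So `m * n` determines `m` and `n` once the images of `m` in `A` and in `FreeMonoid X` are
known, and the unique-product property of `A × FreeMonoid X` pulls back to `A ∗ FreeMonoid X`.
A monoid algebra over a domain and a unique-product monoid is a domain.
-/

open Monoid

namespace Monoid.Coprod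

variable {A X : Type*}

/-- The word `a₀ x₁ a₁ ⋯ xₙ aₙ` is stored as `(a₀, [(x₁, a₁), …, (xₙ, aₙ)])`. -/
abbrev NormalWord (A X : Type*) := A × List (X × A)

namespace NormalWord

section Monoid

variable [Monoid A]

def toCoprod (w : NormalWord A X) : A ∗ FreeMonoid X :=
  inl w.1 * (w.2.map fun p => inr (FreeMonoid.of p.1) * inl p.2).prod

@[simp]
theorem toCoprod_nil (a : A) : toCoprod ((a, []) : NormalWord A X) = inl a := by
  simp [toCoprod]

theorem toCoprod_cons (a c : A) (x : X) (l : List (X × A)) :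
    toCoprod (a, (x, c) :: l) = inl a * inr (FreeMonoid.of x) * toCoprod (c, l) := by
  simp [toCoprod, mul_assoc]

def append : NormalWord A X → NormalWord A X → NormalWord A X
  | (a, []), (b, l) => (a * b, l)
  | (a, (x, c) :: l), w => (a, (x, (append (c, l) w).1) :: (append (c, l) w).2)

def lmul : A ∗ FreeMonoid X →* Function.End (NormalWord A X) :=
  lift
    { toFun a w := (a * w.1, w.2)
      map_one' := funext fun w => Prod.ext (one_mul w.1) rfl
      map_mul' a b := funext fun w => Prod.ext (mul_assoc a b w.1) rfl }
    (FreeMonoid.lift fun x w => (1, (x, w.1) :: w.2))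

theorem lmul_inl (a : A) (w : NormalWord A X) : lmul (inl a) w = (a * w.1, w.2) := by
  rw [lmul, lift_apply_inl]; rfl

theorem lmul_inr_of (x : X) (w : NormalWord A X) :
    lmul (inr (FreeMonoid.of x)) w = (1, (x, w.1) :: w.2) := by
  rw [lmul, lift_apply_inr]
  exact congrFun (FreeMonoid.lift_eval_of (M := Function.End (NormalWord A X)) _ x) w

theorem lmul_mul (m n : A ∗ FreeMonoid X) (w : NormalWord A X) :
    lmul (m * n) w = lmul m (lmul n w) := by
  rw [map_mul]; rfl

theorem toCoprod_lmul_inl (a : A) (w : NormalWord A X) :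
    toCoprod (lmul (inl a) w) = inl a * toCoprod w := by
  rw [lmul_inl]
  rcases w with ⟨b, _ | ⟨⟨x, c⟩, l⟩⟩
  · simp
  · simp [toCoprod_cons, mul_assoc]

theorem toCoprod_lmul_inr (n : FreeMonoid X) (w : NormalWord A X) :
    toCoprod (lmul (inr n) w) = inr n * toCoprod w := by
  induction n using FreeMonoid.inductionOn' generalizing w with
  | one => rw [map_one, map_one, one_mul]; rfl
  | of_mul x n ih =>
    rw [map_mul, lmul_mul, lmul_inr_of, toCoprod_cons, ih, map_one, one_mul, mul_assoc]

theorem toCoprod_lmul (m : A ∗ FreeMonoid X) (w : NormalWord A X) :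
    toCoprod (lmul m w) = m * toCoprod w := by
  induction m using induction_on' generalizing w with
  | one => rw [map_one, one_mul]; rfl
  | inl_mul a m ih => rw [lmul_mul, toCoprod_lmul_inl, ih, mul_assoc]
  | inr_mul n m ih => rw [lmul_mul, toCoprod_lmul_inr, ih, mul_assoc]

def ofCoprod (m : A ∗ FreeMonoid X) : NormalWord A X := lmul m (1, [])

theorem toCoprod_ofCoprod (m : A ∗ FreeMonoid X) : toCoprod (ofCoprod m) = m := by
  rw [ofCoprod, toCoprod_lmul, toCoprod_nil, map_one, mul_one]

theorem ofCoprod_injective : Function.Injective (ofCoprod : A ∗ FreeMonoid X → NormalWord A X) :=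
  Function.LeftInverse.injective toCoprod_ofCoprod

theorem lmul_toCoprod : ∀ v w : NormalWord A X, lmul (toCoprod v) w = append v w
  | (a, []), w => by rw [toCoprod_nil, lmul_inl, append]
  | (a, (x, c) :: l), w => by
    rw [toCoprod_cons, lmul_mul, lmul_mul, lmul_toCoprod (c, l), lmul_inr_of, lmul_inl, mul_one,
      append]

theorem ofCoprod_mul (m n : A ∗ FreeMonoid X) :
    ofCoprod (m * n) = append (ofCoprod m) (ofCoprod n) := by
  rw [← lmul_toCoprod, toCoprod_ofCoprod, ofCoprod, ofCoprod, lmul_mul]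

theorem fst_toCoprod : ∀ w : NormalWord A X, fst (toCoprod w) = w.1 * (w.2.map Prod.snd).prod
  | (a, []) => by simp
  | (a, (x, c) :: l) => by simp [toCoprod_cons, fst_toCoprod (c, l), mul_assoc]

theorem snd_toCoprod :
    ∀ w : NormalWord A X, snd (toCoprod w) = FreeMonoid.ofList (w.2.map Prod.fst)
  | (a, []) => by simp
  | (a, (x, c) :: l) => by simp [toCoprod_cons, snd_toCoprod (c, l)]

end Monoid

theorem eq_and_eq_of_append_eq_append [Monoid A] [IsLeftCancelMul A] :
    ∀ {v v' w w' : NormalWord A X}, append v w = append v' w' →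
      v.1 * (v.2.map Prod.snd).prod = v'.1 * (v'.2.map Prod.snd).prod →
      v.2.map Prod.fst = v'.2.map Prod.fst → v = v' ∧ w = w'
  | (a, []), (a', []), (b, l), (b', l'), h, hprod, _ => by
    simp only [List.map_nil, List.prod_nil, mul_one] at hprod
    subst hprod
    simp only [append, Prod.mk.injEq, mul_right_inj] at h
    exact ⟨rfl, Prod.ext h.1 h.2⟩
  | (a, (x, c) :: l), (a', (x', c') :: l'), w, w', h, hprod, hletters => by
    simp only [append, Prod.mk.injEq, List.cons.injEq] at h
    obtain ⟨rfl, ⟨rfl, hhead⟩, htail⟩ := h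
    simp only [List.map_cons, List.prod_cons, mul_right_inj, List.cons.injEq] at hprod hletters
    obtain ⟨⟨⟩, rfl⟩ := eq_and_eq_of_append_eq_append (Prod.ext hhead htail) hprod hletters.2
    exact ⟨rfl, rfl⟩
  | (_, []), (_, _ :: _), _, _, _, _, h | (_, _ :: _), (_, []), _, _, _, _, h => by
    simp at h

end NormalWord

open NormalWord in
theorem eq_and_eq_of_mul_eq_mul [Monoid A] [IsLeftCancelMul A] {m n m' n' : A ∗ FreeMonoid X}
    (h : m * n = m' * n') (hfst : fst m = fst m') (hsnd : snd m = snd m') :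
    m = m' ∧ n = n' := by
  rw [← toCoprod_ofCoprod m, ← toCoprod_ofCoprod m'] at hfst hsnd
  rw [fst_toCoprod, fst_toCoprod] at hfst
  rw [snd_toCoprod, snd_toCoprod, FreeMonoid.ofList.apply_eq_iff_eq] at hsnd
  have hnf : append (ofCoprod m) (ofCoprod n) = append (ofCoprod m') (ofCoprod n') := by
    rw [← ofCoprod_mul, ← ofCoprod_mul, h]
  exact (eq_and_eq_of_append_eq_append hnf hfst hsnd).imp (ofCoprod_injective ·)
    (ofCoprod_injective ·)

instance [Monoid A] [IsLeftCancelMul A] [UniqueProds A] : UniqueProds (A ∗ FreeMonoid X) :=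
  UniqueProds.of_mulHom (fst.prod snd).toMulHom fun _ _ _ _ h hf =>
    eq_and_eq_of_mul_eq_mul h (congrArg Prod.fst hf.1) (congrArg Prod.snd hf.1)

end Monoid.Coprod

/-- Let `M = [Y] ∗ ⟨X⟩` be the coproduct of the free commutative monoid on
`Y` and the free monoid on `X`. The monoid algebra `ℤ[M]` is a domain. -/
theorem stmt10 (X Y : Type*) :
    IsDomain (MonoidAlgebra ℤ (Monoid.Coprod (Multiplicative (Y →₀ ℕ)) (FreeMonoid X))) :=
  inferInstance
end

section
/- Let X and Y be (possibly empty) sets and let M = [Y] ∗ ⟨X⟩ be the monoid coproduct of the free commutative monoid on Y and the free monoid on X. If f, g ∈ ℤ[M] (MonoidAlgebra ℤ M) satisfy f^n = g^n for some integer n ≥ 1, then f = g or f = -g. -/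
/-!
In a linearly ordered ring, `a ^ n = b ^ n` with `n ≠ 0` forces `a = b` or `a = -b`. If a monoid
`M` carries a linear order for which multiplication is strictly monotone on both sides, then
`ℤ[M]` is such a ring: an element is positive when its coefficient at the largest monomial of its
support is positive, and leading terms multiply.

It remains to bi-order `M = [Y] ∗ ⟨X⟩`. Its Magnus map `μ : M →* ℤ[M]`, with `μ g = 1 + g` on the
generators `y ∈ Y` and `x ∈ X`, is injective because `μ m` is `m` plus terms of lower total degree.
Order `ℤ[M]` additively by the sign of the coefficient at a monomial of least degree (ties broken
by a well-order of `M`). As `μ c - 1` only has terms of positive degree, multiplying by `μ c` on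
either side does not change that coefficient, so pulling this order back along `μ` gives a
bi-invariant order on `M`.
-/

open scoped Pointwise

namespace MonoidAlgebra

theorem mul_mem_supported {k M : Type*} [Semiring k] [Mul M] {s t : Set M}
    {x y : MonoidAlgebra k M} (hx : x ∈ supported k k s) (hy : y ∈ supported k k t) :
    x * y ∈ supported k k (s * t) := by
  classical
  rw [mem_supported] at *
  exact (Finset.coe_subset.2 (support_coeff_mul_subset x y)).trans
    (by rw [Finset.coe_mul]; exact Set.mul_subset_mul hx hy)

theorem single_mem_supported {k M : Type*} [Semiring k] {s : Set M} {m : M} (r : k)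
    (hm : m ∈ s) : single m r ∈ supported k k s :=
  mem_supported.2 ((Finset.coe_subset.2 Finsupp.support_single_subset).trans (by simpa using hm))

variable {R M : Type*} [Ring R] [LinearOrder R]

def LeadingCoeffPos [LinearOrder M] (f : MonoidAlgebra R M) : Prop :=
  ∃ m, 0 < f.coeff m ∧ ∀ u, m < u → f.coeff u = 0

theorem LeadingCoeffPos.ne_zero [LinearOrder M] {f : MonoidAlgebra R M}
    (hf : LeadingCoeffPos f) : f ≠ 0 := by
  rintro rfl
  obtain ⟨m, hm, -⟩ := hf
  exact hm.ne rfl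

section Additive

variable [IsOrderedAddMonoid R] [LinearOrder M]

theorem LeadingCoeffPos.add {f g : MonoidAlgebra R M} (hf : LeadingCoeffPos f)
    (hg : LeadingCoeffPos g) : LeadingCoeffPos (f + g) := by
  obtain ⟨a, ha, hfa⟩ := hf
  obtain ⟨b, hb, hgb⟩ := hg
  refine ⟨max a b, ?_, fun u hu => ?_⟩
  · rcases lt_trichotomy a b with hab | rfl | hab
    · simpa [max_eq_right hab.le, hfa b hab] using hb
    · simpa using add_pos ha hb
    · simpa [max_eq_left hab.le, hgb a hab] using ha
  · simp [hfa u ((le_max_left a b).trans_lt hu), hgb u ((le_max_right a b).trans_lt hu)]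

theorem LeadingCoeffPos.not_neg {f : MonoidAlgebra R M} (hf : LeadingCoeffPos f) :
    ¬ LeadingCoeffPos (-f) := fun hnf => by
  simpa using (hf.add hnf).ne_zero

theorem leadingCoeffPos_or_neg {f : MonoidAlgebra R M} (hf : f ≠ 0) :
    LeadingCoeffPos f ∨ LeadingCoeffPos (-f) := by
  have hne : f.coeff.support.Nonempty := by
    rwa [Finsupp.support_nonempty_iff, Ne, coeff_eq_zero]
  set m := f.coeff.support.max' hne
  have hmax : ∀ u, m < u → f.coeff u = 0 := fun u hu => by
    by_contra h
    exact hu.not_ge (f.coeff.support.le_max' u (Finsupp.mem_support_iff.2 h))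
  rcases (Finsupp.mem_support_iff.1 (f.coeff.support.max'_mem hne)).lt_or_gt with h | h
  · exact .inr ⟨m, by simpa using h, fun u hu => by simp [hmax u hu]⟩
  · exact .inl ⟨m, h, hmax⟩

variable (R M) in
def nonnegCone : AddGroupCone (MonoidAlgebra R M) where
  carrier := {f | f = 0 ∨ LeadingCoeffPos f}
  zero_mem' := .inl rfl
  add_mem' := by
    rintro f g (rfl | hf) (rfl | hg)
    exacts [.inl (add_zero 0), .inr (by simpa), .inr (by simpa), .inr (hf.add hg)]
  eq_zero_of_mem_of_neg_mem' := by
    rintro f (rfl | hf) (hnf | hnf)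
    exacts [rfl, rfl, neg_eq_zero.1 hnf, (hf.not_neg hnf).elim]

instance : HasMemOrNegMem (nonnegCone R M) where
  mem_or_neg_mem f := by
    rcases eq_or_ne f 0 with rfl | hf
    · exact .inl (.inl rfl)
    · exact (leadingCoeffPos_or_neg hf).imp .inr .inr

noncomputable abbrev leadingCoeffOrder : LinearOrder (MonoidAlgebra R M) :=
  open scoped Classical in LinearOrder.mkOfAddGroupCone (nonnegCone R M)

attribute [local instance] leadingCoeffOrder

theorem lt_iff_leadingCoeffPos_sub {f g : MonoidAlgebra R M} :
    f < g ↔ LeadingCoeffPos (g - f) := by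
  change (g - f = 0 ∨ LeadingCoeffPos (g - f)) ∧ ¬ (f - g = 0 ∨ LeadingCoeffPos (f - g)) ↔ _
  rw [← neg_sub g f, neg_eq_zero]
  constructor
  · rintro ⟨h | h, hn⟩
    exacts [(hn (.inl h)).elim, h]
  · intro h
    exact ⟨.inr h, by rintro (h0 | hn); exacts [h.ne_zero h0, h.not_neg hn]⟩

theorem pos_iff_leadingCoeffPos {f : MonoidAlgebra R M} : 0 < f ↔ LeadingCoeffPos f := by
  rw [lt_iff_leadingCoeffPos_sub, sub_zero]

end Additive

section Ring

attribute [local instance] leadingCoeffOrder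

variable [IsStrictOrderedRing R] [Monoid M] [LinearOrder M] [MulLeftStrictMono M]
  [MulRightStrictMono M]

theorem LeadingCoeffPos.mul {f g : MonoidAlgebra R M} (hf : LeadingCoeffPos f)
    (hg : LeadingCoeffPos g) : LeadingCoeffPos (f * g) := by
  classical
  have := mulLeftMono_of_mulLeftStrictMono M
  have := mulRightMono_of_mulRightStrictMono M
  obtain ⟨a, ha, hfa⟩ := hf
  obtain ⟨b, hb, hgb⟩ := hg
  have hf_le : ∀ u ∈ f.coeff.support, u ≤ a := fun u hu =>
    not_lt.1 fun h => Finsupp.mem_support_iff.1 hu (hfa u h)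
  have hg_le : ∀ v ∈ g.coeff.support, v ≤ b := fun v hv =>
    not_lt.1 fun h => Finsupp.mem_support_iff.1 hv (hgb v h)
  refine ⟨a * b, ?_, fun w hw => ?_⟩
  · rw [coeff_mul_mul_of_uniqueMul fun u v hu hv huv =>
      (mul_eq_mul_iff_eq_and_eq (hf_le u hu) (hg_le v hv)).1 huv]
    exact mul_pos ha hb
  · by_contra h
    obtain ⟨u, hu, v, hv, rfl⟩ :=
      Finset.mem_mul.1 (support_coeff_mul_subset f g (Finsupp.mem_support_iff.2 h))
    exact hw.not_ge (mul_le_mul' (hf_le u hu) (hg_le v hv))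

theorem isStrictOrderedRing_leadingCoeffOrder : IsStrictOrderedRing (MonoidAlgebra R M) :=
  haveI := IsOrderedAddMonoid.mkOfCone (nonnegCone R M)
  haveI : ZeroLEOneClass (MonoidAlgebra R M) :=
    ⟨(pos_iff_leadingCoeffPos.2 ⟨1, by simp [coeff_one_one], fun u hu => by
      simp [one_def, hu.ne]⟩).le⟩
  .of_mul_pos fun _ _ hf hg =>
    pos_iff_leadingCoeffPos.2 ((pos_iff_leadingCoeffPos.1 hf).mul (pos_iff_leadingCoeffPos.1 hg))

theorem eq_or_eq_neg_of_pow_eq_pow {f g : MonoidAlgebra R M} {n : ℕ} (hn : n ≠ 0)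
    (h : f ^ n = g ^ n) : f = g ∨ f = -g :=
  haveI := isStrictOrderedRing_leadingCoeffOrder (R := R) (M := M)
  ((pow_eq_pow_iff_of_ne_zero hn).1 h).imp_right And.left

end Ring

section Degree

variable [Monoid M] [LinearOrder M] {N : Type*} [CommMonoid N] [LinearOrder N] {deg : M →* N}

/- For antitone `deg` the leading monomial has the least degree, so terms of larger degree
cannot change it. -/
theorem LeadingCoeffPos.add_of_degree_gt (hdeg : Antitone deg) {D E : MonoidAlgebra R M}
    (hD : LeadingCoeffPos D)
    (hE : E ∈ supported R R {u | ∃ v ∈ D.coeff.support, deg v < deg u}) :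
    LeadingCoeffPos (D + E) := by
  obtain ⟨m, hm, hmax⟩ := hD
  have hmin : ∀ v ∈ D.coeff.support, deg m ≤ deg v := fun v hv =>
    not_lt.1 fun h => Finsupp.mem_support_iff.1 hv (hmax v (hdeg.reflect_lt h))
  have hE0 : ∀ u, deg u ≤ deg m → E.coeff u = 0 := fun u hu => by
    by_contra h
    obtain ⟨v, hv, hvu⟩ := mem_supported.1 hE (Finsupp.mem_support_iff.2 h)
    exact ((hmin v hv).trans_lt hvu).not_ge hu
  exact ⟨m, by simpa [hE0 m le_rfl] using hm,
    fun u hu => by simp [hmax u hu, hE0 u (hdeg hu.le)]⟩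

variable [IsOrderedCancelMonoid N] {P D : MonoidAlgebra R M}

theorem LeadingCoeffPos.mul_left (hdeg : Antitone deg)
    (hP : P - 1 ∈ supported R R {u | 1 < deg u}) (hD : LeadingCoeffPos D) :
    LeadingCoeffPos (P * D) := by
  rw [← add_sub_cancel 1 P, add_mul, one_mul]
  refine hD.add_of_degree_gt hdeg
    (supported_mono ?_ (mul_mem_supported hP (mem_supported.2 subset_rfl)))
  exact Set.mul_subset_iff.2 fun p (hp : 1 < deg p) v hv =>
    ⟨v, hv, by simpa using lt_mul_of_one_lt_left' (deg v) hp⟩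

theorem LeadingCoeffPos.mul_right (hdeg : Antitone deg)
    (hP : P - 1 ∈ supported R R {u | 1 < deg u}) (hD : LeadingCoeffPos D) :
    LeadingCoeffPos (D * P) := by
  rw [← add_sub_cancel 1 P, mul_add, mul_one]
  refine hD.add_of_degree_gt hdeg
    (supported_mono ?_ (mul_mem_supported (mem_supported.2 subset_rfl) hP))
  exact Set.mul_subset_iff.2 fun v hv p (hp : 1 < deg p) =>
    ⟨v, hv, by simpa using lt_mul_of_one_lt_right' (deg v) hp⟩

end Degree

end MonoidAlgebra

theorem exists_linearOrder_antitone {α β : Type*} [LinearOrder β] (f : α → β) :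
    ∃ _ : LinearOrder α, Antitone f := by
  let := IsWellOrder.linearOrder (WellOrderingRel (α := α))
  exact ⟨LinearOrder.lift' (fun a => toLex (OrderDual.toDual (f a), a))
    fun a b h => congrArg (fun p => (ofLex p).2) h, fun a b hab => Prod.Lex.monotone_fst _ _ hab⟩

section Magnus

open MonoidAlgebra

variable {M N : Type*} [Monoid M] [CommMonoid N] [LinearOrder N] [IsOrderedCancelMonoid N]
  {deg : M →* N} {μ : M →* MonoidAlgebra ℤ M}

theorem magnus_sub_one_mem
    (hμ : Submonoid.closure {g | 1 < deg g ∧ μ g = 1 + single g 1} = ⊤) (m : M) :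
    μ m - 1 ∈ supported ℤ ℤ {u | 1 < deg u} := by
  have hmul : ∀ {a b : MonoidAlgebra ℤ M}, a ∈ supported ℤ ℤ {u | 1 < deg u} →
      b ∈ supported ℤ ℤ {u | 1 < deg u} → a * b ∈ supported ℤ ℤ {u | 1 < deg u} :=
    fun ha hb => supported_mono (Set.mul_subset_iff.2 fun x (hx : 1 < deg x) y (hy : 1 < deg y) =>
      by simpa using one_lt_mul'' hx hy) (mul_mem_supported ha hb)
  induction (hμ ▸ Submonoid.mem_top m : m ∈ Submonoid.closure _)
    using Submonoid.closure_induction with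
  | mem g hg => rw [hg.2, add_sub_cancel_left]; exact single_mem_supported 1 hg.1
  | one => simp
  | mul x y _ _ hx hy =>
    have h : μ (x * y) - 1 = (μ x - 1) * (μ y - 1) + (μ x - 1) + (μ y - 1) := by
      rw [map_mul]; noncomm_ring
    rw [h]
    exact add_mem (add_mem (hmul hx hy) hx) hy

theorem magnus_sub_single_mem
    (hμ : Submonoid.closure {g | 1 < deg g ∧ μ g = 1 + single g 1} = ⊤) (m : M) :
    μ m - single m 1 ∈ supported ℤ ℤ {u | deg u < deg m} := by
  induction (hμ ▸ Submonoid.mem_top m : m ∈ Submonoid.closure _)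
    using Submonoid.closure_induction with
  | mem g hg =>
    rw [hg.2, add_sub_cancel_right, one_def]
    exact single_mem_supported 1 (by simpa using hg.1)
  | one => simp [one_def]
  | mul x y _ _ hx hy =>
    have hsingle (z : M) : single z 1 ∈ supported ℤ ℤ {u | deg u ≤ deg z} :=
      single_mem_supported 1 (le_refl (deg z))
    have hμy : μ y ∈ supported ℤ ℤ {u | deg u ≤ deg y} := by
      rw [← sub_add_cancel (μ y) (single y 1)]
      exact add_mem (supported_mono (fun u (hu : deg u < deg y) => hu.le) hy) (hsingle y)
    have h : μ (x * y) - single (x * y) 1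
        = (μ x - single x 1) * μ y + single x 1 * (μ y - single y 1) := by
      rw [map_mul, ← mul_one (1 : ℤ), ← single_mul_single]; noncomm_ring
    rw [h, map_mul]
    refine add_mem (supported_mono ?_ (mul_mem_supported hx hμy))
      (supported_mono ?_ (mul_mem_supported (hsingle x) hy))
    · exact Set.mul_subset_iff.2 fun u (hu : deg u < deg x) v (hv : deg v ≤ deg y) => by
        simpa using mul_lt_mul_of_lt_of_le hu hv
    · exact Set.mul_subset_iff.2 fun u (hu : deg u ≤ deg x) v (hv : deg v < deg y) => by
        simpa using mul_lt_mul_of_le_of_lt hu hv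

theorem magnus_injective
    (hμ : Submonoid.closure {g | 1 < deg g ∧ μ g = 1 + single g 1} = ⊤) :
    Function.Injective μ := by
  have hcoeff (m u : M) (hu : ¬ deg u < deg m) :
      (μ m).coeff u = (single m 1 : MonoidAlgebra ℤ M).coeff u :=
    sub_eq_zero.1 (mem_supported'.1 (magnus_sub_single_mem hμ m) u hu)
  intro a b hab
  by_contra hne
  wlog hba : deg b ≤ deg a generalizing a b
  · exact this hab.symm (Ne.symm hne) (le_of_not_ge hba)
  have h := hcoeff a a (lt_irrefl _)
  rw [hab, hcoeff b a hba.not_gt] at h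
  simp [Ne.symm hne] at h

theorem exists_linearOrder_mulStrictMono_of_magnus
    (hμ : Submonoid.closure {g | 1 < deg g ∧ μ g = 1 + single g 1} = ⊤) :
    ∃ _ : LinearOrder M, MulLeftStrictMono M ∧ MulRightStrictMono M := by
  obtain ⟨_, hanti⟩ := exists_linearOrder_antitone deg
  let _ := leadingCoeffOrder (R := ℤ) (M := M)
  refine ⟨LinearOrder.lift' μ (magnus_injective hμ), ⟨fun c a b hab => ?_⟩,
    ⟨fun c a b hab => ?_⟩⟩
  · change μ (c * a) < μ (c * b)
    replace hab : μ a < μ b := hab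
    rw [lt_iff_leadingCoeffPos_sub] at hab ⊢
    rw [map_mul, map_mul, ← mul_sub]
    exact hab.mul_left hanti (magnus_sub_one_mem hμ c)
  · change μ (a * c) < μ (b * c)
    replace hab : μ a < μ b := hab
    rw [lt_iff_leadingCoeffPos_sub] at hab ⊢
    rw [map_mul, map_mul, ← sub_mul]
    exact hab.mul_right hanti (magnus_sub_one_mem hμ c)

end Magnus

namespace Monoid.Coprod

open MonoidAlgebra Multiplicative

variable {X Y : Type*}

noncomputable def wordDegree : Multiplicative (Y →₀ ℕ) ∗ FreeMonoid X →* Multiplicative ℕ :=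
  lift (AddMonoidHom.toMultiplicative Finsupp.degree) (FreeMonoid.lift fun _ => ofAdd 1)

/- The factor `[Y]` is first sent into its own monoid algebra, which is commutative, so that
`Finsupp.prod` is multiplicative; `magnus` then pushes it into `ℤ[M]` along `inl`. -/
noncomputable def magnusComm :
    Multiplicative (Y →₀ ℕ) →* MonoidAlgebra ℤ (Multiplicative (Y →₀ ℕ)) where
  toFun a := a.toAdd.prod fun y k => (1 + single (ofAdd (Finsupp.single y 1)) 1) ^ k
  map_one' := Finsupp.prod_zero_index
  map_mul' _ _ := Finsupp.prod_add_index' (fun _ => pow_zero _) fun _ _ _ => pow_add _ _ _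

noncomputable def magnus :
    Multiplicative (Y →₀ ℕ) ∗ FreeMonoid X →*
      MonoidAlgebra ℤ (Multiplicative (Y →₀ ℕ) ∗ FreeMonoid X) :=
  lift ((mapDomainRingHom ℤ inl).toMonoidHom.comp magnusComm)
    (FreeMonoid.lift fun x => 1 + single (inr (.of x)) 1)

theorem closure_magnus_generators :
    Submonoid.closure {g : Multiplicative (Y →₀ ℕ) ∗ FreeMonoid X |
      1 < wordDegree g ∧ magnus g = 1 + single g 1} = ⊤ := by
  set S := Submonoid.closure {g : Multiplicative (Y →₀ ℕ) ∗ FreeMonoid X |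
      1 < wordDegree g ∧ magnus g = 1 + single g 1}
  have hinl (y : Y) : inl (ofAdd (Finsupp.single y 1)) ∈ S := by
    refine Submonoid.subset_closure ⟨?_, ?_⟩
    · simp only [wordDegree, lift_apply_inl, AddMonoidHom.toMultiplicative_apply_apply,
        toAdd_ofAdd, Finsupp.degree_single]
      exact Nat.one_pos
    · simp [magnus, magnusComm, mapDomain_add, mapDomain_one]
  have hinr (x : X) : inr (FreeMonoid.of x) ∈ S :=
    Submonoid.subset_closure ⟨Nat.one_pos, by simp [magnus]⟩
  refine eq_top_iff.2 fun m _ => induction_on m (fun a => ?_) (fun w => ?_) fun _ _ => S.mul_mem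
  · induction a using Multiplicative.rec with | ofAdd d => ?_
    induction d using Finsupp.induction with
    | zero => rw [ofAdd_zero, map_one]; exact S.one_mem
    | single_add y n d _ _ ih =>
      rw [ofAdd_add, map_mul, ← Finsupp.smul_single_one, ofAdd_nsmul, map_pow]
      exact S.mul_mem (S.pow_mem (hinl y) n) ih
  · induction w using FreeMonoid.inductionOn' with
    | one => rw [map_one]; exact S.one_mem
    | of_mul x w ih => rw [map_mul]; exact S.mul_mem (hinr x) ih

end Monoid.Coprod

/-- Let `M = [Y] ∗ ⟨X⟩` be the coproduct of the free commutative monoid on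
`Y` and the free monoid on `X`. If `f, g ∈ ℤ[M]` satisfy `f ^ n = g ^ n` for some
`n ≥ 1`, then `f = g` or `f = -g`. -/
theorem stmt11 (X Y : Type*)
    (f g : MonoidAlgebra ℤ (Monoid.Coprod (Multiplicative (Y →₀ ℕ)) (FreeMonoid X)))
    (n : ℕ) (hn : 1 ≤ n) (h : f ^ n = g ^ n) :
    f = g ∨ f = -g := by
  obtain ⟨_, _, _⟩ := exists_linearOrder_mulStrictMono_of_magnus
    (Monoid.Coprod.closure_magnus_generators (X := X) (Y := Y))
  exact MonoidAlgebra.eq_or_eq_neg_of_pow_eq_pow (Nat.one_le_iff_ne_zero.1 hn) h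
end

section
/- Let A, B, C be simple graphs on countable vertex sets such that in each of A, B, C every connected component is finite and for every connected component only finitely many connected components are isomorphic to it. If C is nonempty and the strong product A ⊠ C is isomorphic to B ⊠ C, then A is isomorphic to B. -/
/-!
Lovász's counting method. For finite graphs `X`, let `hom(X, Y)` count the maps that send edges to
edges or collapse them. These are the homomorphisms of reflexive graphs, for which the strong
product is the categorical product, so `hom(X, Y ⊠ Z) = hom(X, Y) * hom(X, Z)`; and a finite
multiset of finite graphs is determined by its counts `hom(X, -)`. Indeed, inverting over the
partitions of `V(X)` turns these counts into counts of injective homomorphisms, which are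
triangular with respect to the number of vertices plus edges.

The components of `A ⊠ C` are the products of those of `A` and `C`. So, if `a_n(X)` sums
`hom(X, K)` over the components `K` of `A` with `n` vertices, then `A ⊠ C` gives the Dirichlet
convolution of `a` and `c`. Let `k` be the least size of a component of `C`. Then `c_k(X) > 0`
and `c_e = 0` for `e < k`, and induction on `n` (looking at size `n * k`) gives `a_n = b_n`.
Hence `A` and `B` have the same multiset of component types of every size, and `A ≅ B`.
-/

/-- The strong product of simple graphs: `(g, h)` and `(g', h')` are adjacent iff
(`g = g'` and `h h'` is an edge), or (`g g'` is an edge and `h = h'`), or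
(`g g'` is an edge and `h h'` is an edge). -/
def strongProd {α β : Type} (G : SimpleGraph α) (H : SimpleGraph β) :
    SimpleGraph (α × β) where
  Adj p q :=
    (p.1 = q.1 ∧ H.Adj p.2 q.2) ∨ (G.Adj p.1 q.1 ∧ p.2 = q.2) ∨
      (G.Adj p.1 q.1 ∧ H.Adj p.2 q.2)
  symm := by
    constructor
    rintro ⟨g, h⟩ ⟨g', h'⟩ (⟨rfl, hH⟩ | ⟨hG, rfl⟩ | ⟨hG, hH⟩)
    · exact Or.inl ⟨rfl, hH.symm⟩
    · exact Or.inr (Or.inl ⟨hG.symm, rfl⟩)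
    · exact Or.inr (Or.inr ⟨hG.symm, hH.symm⟩)
  loopless := by
    constructor
    rintro ⟨g, h⟩ (⟨-, hH⟩ | ⟨hG, -⟩ | ⟨hG, -⟩)
    · exact H.irrefl hH
    · exact G.irrefl hG
    · exact G.irrefl hG

open SimpleGraph Function Finset

variable {U V W V' W' : Type}

/-- Weak homomorphisms are the homomorphisms of the reflexive closures; in that category
`strongProd` is the categorical product. -/
def IsWeakHom (X : SimpleGraph V) (Y : SimpleGraph W) (f : V → W) : Prop :=
  ∀ ⦃x y⦄, X.Adj x y → f x = f y ∨ Y.Adj (f x) (f y)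

section WeakHom

variable {X : SimpleGraph V} {Y : SimpleGraph W} {Z : SimpleGraph U}

lemma IsWeakHom.comp {g : W → U} {f : V → W} (hg : IsWeakHom Y Z g) (hf : IsWeakHom X Y f) :
    IsWeakHom X Z (g ∘ f) := fun _ _ h =>
  (hf h).elim (fun he => Or.inl (congrArg g he)) (fun h' => hg h')

lemma SimpleGraph.Hom.isWeakHom (f : X →g Y) : IsWeakHom X Y f :=
  fun _ _ h => Or.inr (f.map_adj h)

lemma IsWeakHom.reachable {f : V → W} (hf : IsWeakHom X Y f) {x y : V} (h : X.Reachable x y) :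
    Y.Reachable (f x) (f y) := by
  obtain ⟨w⟩ := h
  induction w with
  | nil => rfl
  | cons hadj _ ih =>
    refine Reachable.trans ?_ ih
    rcases hf hadj with he | he
    · rw [he]
    · exact he.reachable

lemma isWeakHom_strongProd_iff {G : SimpleGraph W} {H : SimpleGraph U} {f : V → W × U} :
    IsWeakHom X (strongProd G H) f ↔
      IsWeakHom X G (Prod.fst ∘ f) ∧ IsWeakHom X H (Prod.snd ∘ f) := by
  refine ⟨fun hf => ⟨fun x y h => ?_, fun x y h => ?_⟩, fun ⟨h1, h2⟩ x y h => ?_⟩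
  · rcases hf h with he | ⟨he, -⟩ | ⟨hG, -⟩ | ⟨hG, -⟩
    exacts [Or.inl (congrArg Prod.fst he), Or.inl he, Or.inr hG, Or.inr hG]
  · rcases hf h with he | ⟨-, hH⟩ | ⟨-, he⟩ | ⟨-, hH⟩
    exacts [Or.inl (congrArg Prod.snd he), Or.inr hH, Or.inl he, Or.inr hH]
  · rcases h1 h with he1 | hG <;> rcases h2 h with he2 | hH
    exacts [Or.inl (Prod.ext he1 he2), Or.inr (Or.inl ⟨he1, hH⟩),
      Or.inr (Or.inr (Or.inl ⟨hG, he2⟩)), Or.inr (Or.inr (Or.inr ⟨hG, hH⟩))]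

end WeakHom

noncomputable def weakHomCount (X : SimpleGraph V) (Y : SimpleGraph W) : ℕ :=
  Nat.card {f : V → W // IsWeakHom X Y f}

section Counting

variable {X : SimpleGraph V} {Y : SimpleGraph W}

lemma weakHomCount_congr {X' : SimpleGraph V'} {Y' : SimpleGraph W'} (e : X ≃g X')
    (e' : Y ≃g Y') : weakHomCount X Y = weakHomCount X' Y' :=
  Nat.card_congr <| (e.toEquiv.arrowCongr e'.toEquiv).subtypeEquiv fun f =>
    ⟨fun hf => (e'.toHom.isWeakHom.comp hf).comp e.symm.toHom.isWeakHom, fun hf => by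
      convert (e'.symm.toHom.isWeakHom.comp hf).comp e.toHom.isWeakHom using 1
      ext x
      simpa using congrArg f (e.toEquiv.symm_apply_apply x).symm⟩

lemma weakHomCount_strongProd (G : SimpleGraph W) (H : SimpleGraph U) :
    weakHomCount X (strongProd G H) = weakHomCount X G * weakHomCount X H := by
  rw [weakHomCount, weakHomCount, weakHomCount, ← Nat.card_prod]
  exact Nat.card_congr
    { toFun f := (⟨_, (isWeakHom_strongProd_iff.1 f.2).1⟩, ⟨_, (isWeakHom_strongProd_iff.1 f.2).2⟩)
      invFun p := ⟨fun x => (p.1.1 x, p.2.1 x), isWeakHom_strongProd_iff.2 ⟨p.1.2, p.2.2⟩⟩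
      left_inv _ := rfl
      right_inv _ := rfl }

lemma weakHomCount_pos [Finite V] [Finite W] [Nonempty W] : 0 < weakHomCount X Y :=
  have : Nonempty {f : V → W // IsWeakHom X Y f} :=
    ⟨⟨fun _ => Classical.arbitrary W, fun _ _ _ => Or.inl rfl⟩⟩
  Nat.card_pos

def SimpleGraph.Copy.congr {X' : SimpleGraph V'} {Y' : SimpleGraph W'} (e : X ≃g X')
    (e' : Y ≃g Y') : X.Copy Y ≃ X'.Copy Y' where
  toFun f := e'.toCopy.comp (f.comp e.symm.toCopy)
  invFun f := e'.symm.toCopy.comp (f.comp e.toCopy)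
  left_inv f := Copy.ext fun x => by simp [Copy.comp_apply]
  right_inv f := Copy.ext fun x => by simp [Copy.comp_apply]

abbrev quotientGraph (X : SimpleGraph V) (P : Setoid V) : SimpleGraph (Quotient P) :=
  X.map (Quotient.mk P)

def weakHomKerEquivCopy (X : SimpleGraph V) (Y : SimpleGraph W) (P : Setoid V) :
    {f : {f : V → W // IsWeakHom X Y f} // Setoid.ker f.1 = P} ≃ (quotientGraph X P).Copy Y where
  toFun f :=
    { toHom :=
        { toFun := Quotient.lift f.1.1 fun a b hab => by rw [← f.2] at hab; exact hab
          map_rel' := by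
            rintro _ _ ⟨hne, x, y, hxy, rfl, rfl⟩
            refine (f.1.2 hxy).resolve_left fun he => hne (Quotient.sound ?_)
            rw [← f.2]
            exact he }
      injective' := by
        rintro ⟨a⟩ ⟨b⟩ hab
        refine Quotient.sound ?_
        rw [← f.2]
        exact hab }
  invFun g := ⟨⟨fun x => g (Quotient.mk P x), fun x y hxy => by
      by_cases hq : Quotient.mk P x = Quotient.mk P y
      · exact Or.inl (congrArg g hq)
      · exact Or.inr (g.toHom.map_adj ⟨hq, x, y, hxy, rfl, rfl⟩)⟩,
    Setoid.ext fun a b => Setoid.ker_def.trans ⟨fun h => Quotient.exact (g.injective h),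
      fun h => congrArg g (Quotient.sound h)⟩⟩
  left_inv f := rfl
  right_inv g := Copy.ext fun u => Quotient.inductionOn u fun _ => rfl

instance [Finite V] : Finite (Setoid V) :=
  Finite.of_injective (fun P : Setoid V => ⇑P) fun _ _ h => Setoid.eq_iff_rel_eq.2 h

noncomputable instance [Finite V] : Fintype (Setoid V) := Fintype.ofFinite _

open Classical in
lemma weakHomCount_eq_sum_copy [Finite V] [Finite W] (X : SimpleGraph V) (Y : SimpleGraph W) :
    weakHomCount X Y = ∑ P : Setoid V, Nat.card ((quotientGraph X P).Copy Y) := by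
  rw [weakHomCount, ← Nat.card_congr (Equiv.sigmaFiberEquiv fun f => Setoid.ker f.1),
    Nat.card_sigma]
  exact Finset.sum_congr rfl fun P _ => Nat.card_congr (weakHomKerEquivCopy X Y P)

lemma nat_card_quotient_lt [Finite V] {P : Setoid V} (hP : P ≠ ⊥) :
    Nat.card (Quotient P) < Nat.card V := by
  refine (Nat.card_le_card_of_surjective _ Quotient.mk_surjective).lt_of_ne fun h => hP ?_
  have hinj := (Quotient.mk_surjective.bijective_of_nat_card_le h.ge).1
  exact Setoid.ext fun a b => ⟨fun hab => hinj (Quotient.sound hab), fun hab => hab ▸ P.refl a⟩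

noncomputable def quotientGraphBotIso (X : SimpleGraph V) : X ≃g quotientGraph X ⊥ :=
  Iso.map (Equiv.ofBijective _ ⟨fun _ _ h => Quotient.exact h, Quotient.mk_surjective⟩) X

/-- Both the vertex map and the edge map of a copy are injective. -/
lemma SimpleGraph.Copy.nonempty_iso [Finite V] [Finite W] (f : X.Copy Y)
    (h : Nat.card W + Y.edgeSet.ncard ≤ Nat.card V + X.edgeSet.ncard) : Nonempty (X ≃g Y) := by
  have hV := Nat.card_le_card_of_injective f f.injective
  have hE : X.edgeSet.ncard ≤ Y.edgeSet.ncard :=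
    Nat.card_le_card_of_injective f.mapEdgeSet f.mapEdgeSet.injective
  let e := Equiv.ofBijective f (f.injective.bijective_of_nat_card_le (by omega))
  have hle : X.map e ≤ Y := (map_le_iff_le_comap e.toEmbedding X Y).2 fun _ _ => f.toHom.map_adj
  have hmap : X.map e = Y := edgeSet_inj.1 <| Set.eq_of_subset_of_ncard_le (edgeSet_mono hle) <| by
    have hmapE := edgeSet_map e.toEmbedding X
    rw [Equiv.coe_toEmbedding] at hmapE
    rw [hmapE, Set.ncard_image_of_injective _ e.toEmbedding.sym2Map.injective]
    omega
  exact ⟨hmap ▸ Iso.map e X⟩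

end Counting

instance finGraphSetoid : Setoid (Σ n, SimpleGraph (Fin n)) where
  r G H := Nonempty (G.2 ≃g H.2)
  iseqv := ⟨fun _ => ⟨Iso.refl⟩, fun ⟨e⟩ => ⟨e.symm⟩, fun ⟨e⟩ ⟨e'⟩ => ⟨e.trans e'⟩⟩

/-- Isomorphism classes of finite simple graphs. -/
def FinGraph : Type := Quotient finGraphSetoid

namespace FinGraph

noncomputable def of (G : SimpleGraph V) [Finite V] : FinGraph :=
  ⟦⟨Nat.card V, G.comap (Finite.equivFin V).symm⟩⟧

noncomputable def card (q : FinGraph) : ℕ := q.out.1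

/-- A representative of the class `q`. -/
noncomputable def graph (q : FinGraph) : SimpleGraph (Fin q.card) := q.out.2

lemma of_eq_of_iff [Finite V] [Finite W] {G : SimpleGraph V} {H : SimpleGraph W} :
    of G = of H ↔ Nonempty (G ≃g H) :=
  Quotient.eq.trans
    ⟨fun ⟨e⟩ => ⟨(Iso.comap _ G).symm.trans (e.trans (Iso.comap _ H))⟩,
      fun ⟨e⟩ => ⟨(Iso.comap _ G).trans (e.trans (Iso.comap _ H).symm)⟩⟩

lemma of_graph (q : FinGraph) : of q.graph = q := by
  conv_rhs => rw [← q.out_eq]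
  exact Quotient.sound ⟨Iso.comap _ _⟩

lemma nonempty_iso_graph_of [Finite V] (G : SimpleGraph V) : Nonempty ((of G).graph ≃g G) :=
  of_eq_of_iff.1 (of_graph _)

lemma card_of [Finite V] (G : SimpleGraph V) : (of G).card = Nat.card V := by
  obtain ⟨e⟩ := nonempty_iso_graph_of G
  rw [← Nat.card_congr e.toEquiv, Nat.card_fin]

lemma finite_setOf_card_eq (n : ℕ) : {q : FinGraph | q.card = n}.Finite := by
  refine (Set.finite_range fun G : SimpleGraph (Fin n) => of G).subset fun q hq => ?_
  exact ⟨q.graph.comap (finCongr hq).symm, (of_eq_of_iff.2 ⟨Iso.comap _ _⟩).trans (of_graph q)⟩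

variable {R S : Multiset FinGraph}

/-- Möbius inversion over the partitions `P` of `V`: the quotient `X/P` is smaller than `X`
unless `P = ⊥`. -/
lemma sum_copy_eq_of_sum_weakHomCount_eq
    (h : ∀ (V : Type) [Finite V] (X : SimpleGraph V),
      (R.map fun q => weakHomCount X q.graph).sum = (S.map fun q => weakHomCount X q.graph).sum)
    (V : Type) [Finite V] (X : SimpleGraph V) :
    (R.map fun q => Nat.card (X.Copy q.graph)).sum =
      (S.map fun q => Nat.card (X.Copy q.graph)).sum := by
  classical
  induction hn : Nat.card V using Nat.strong_induction_on generalizing V with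
  | _ n ih =>
  have hsplit : ∀ T : Multiset FinGraph, (T.map fun q => weakHomCount X q.graph).sum =
      (T.map fun q => Nat.card (X.Copy q.graph)).sum +
        ∑ P ∈ univ.erase ⊥, (T.map fun q => Nat.card ((quotientGraph X P).Copy q.graph)).sum := by
    intro T
    simp_rw [weakHomCount_eq_sum_copy, Multiset.sum_map_sum,
      ← add_sum_erase _ _ (mem_univ (⊥ : Setoid V)),
      Nat.card_congr (Copy.congr (quotientGraphBotIso X) Iso.refl)]
  have hV := h V X
  rw [hsplit R, hsplit S, sum_congr rfl fun P hP =>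
    ih _ (hn ▸ nat_card_quotient_lt (ne_of_mem_erase hP)) (Quotient P) (quotientGraph X P) rfl]
    at hV
  exact Nat.add_right_cancel hV

/-- Lovász's theorem, for weak homomorphisms. -/
theorem eq_of_sum_weakHomCount_eq
    (h : ∀ (V : Type) [Finite V] (X : SimpleGraph V),
      (R.map fun q => weakHomCount X q.graph).sum = (S.map fun q => weakHomCount X q.graph).sum) :
    R = S := by
  classical
  by_contra hne
  set D := (R + S).toFinset.filter fun q => R.count q ≠ S.count q
  have hD : D.Nonempty := by
    obtain ⟨q, hq⟩ := not_forall.1 (mt Multiset.ext.2 hne)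
    refine ⟨q, mem_filter.2 ⟨Multiset.mem_toFinset.2 ?_, hq⟩⟩
    by_contra hqRS
    simp only [Multiset.mem_add, not_or] at hqRS
    exact hq (by rw [Multiset.count_eq_zero.2 hqRS.1, Multiset.count_eq_zero.2 hqRS.2])
  -- by `Copy.nonempty_iso`, no class of `D` other than `q` contains a copy of `q`
  obtain ⟨q, hqD, hmax⟩ :=
    D.exists_max_image (fun q => Nat.card (Fin q.card) + q.graph.edgeSet.ncard) hD
  have hcount : ∀ T : Multiset FinGraph, T ≤ R + S →
      (T.map fun i => Nat.card (q.graph.Copy i.graph)).sum =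
        ∑ i ∈ (R + S).toFinset, T.count i * Nat.card (q.graph.Copy i.graph) := by
    intro T hT
    rw [sum_multiset_map_count]
    exact sum_subset (Multiset.toFinset_subset.2 (Multiset.subset_of_le hT)) fun i _ hi => by
      simp [Multiset.count_eq_zero.2 (Multiset.mem_toFinset.not.1 hi)]
  have heq := sum_copy_eq_of_sum_weakHomCount_eq h _ q.graph
  rw [hcount R (Multiset.le_add_right _ _), hcount S (Multiset.le_add_left _ _),
    ← add_sum_erase _ _ (mem_filter.1 hqD).1, ← add_sum_erase _ _ (mem_filter.1 hqD).1,
    sum_congr rfl fun i hi => ?_] at heq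
  · have hpos : 0 < Nat.card (q.graph.Copy q.graph) :=
      have : Nonempty (q.graph.Copy q.graph) := ⟨Iso.refl.toCopy⟩
      Nat.card_pos
    exact (mem_filter.1 hqD).2 (Nat.eq_of_mul_eq_mul_right hpos (Nat.add_right_cancel heq))
  · obtain ⟨hiq, hi⟩ := mem_erase.1 hi
    by_cases hRS : R.count i = S.count i
    · rw [hRS]
    obtain hzero | hpos := (Nat.card (q.graph.Copy i.graph)).eq_zero_or_pos
    · rw [hzero, mul_zero, mul_zero]
    · obtain ⟨f⟩ := (Nat.card_pos_iff.1 hpos).1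
      refine absurd ?_ hiq
      rw [← of_graph i, ← of_graph q]
      exact (of_eq_of_iff.2 (f.nonempty_iso (hmax i (mem_filter.2 ⟨hi, hRS⟩)))).symm

end FinGraph

/-- Cancellation for Dirichlet convolution by a sequence `c` with lowest nonzero term `c k`. -/
theorem eq_of_sum_divisorsAntidiagonal_mul_eq {a b c : ℕ → ℕ} {k : ℕ} (hk : 0 < k)
    (hc : ∀ e < k, c e = 0) (hck : c k ≠ 0)
    (h : ∀ m, 0 < m → ∑ x ∈ m.divisorsAntidiagonal, a x.1 * c x.2 =
      ∑ x ∈ m.divisorsAntidiagonal, b x.1 * c x.2) {n : ℕ} (hn : 0 < n) : a n = b n := by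
  induction n using Nat.strong_induction_on with
  | _ n ih =>
  have hnk : (n, k) ∈ (n * k).divisorsAntidiagonal :=
    Nat.mem_divisorsAntidiagonal.2 ⟨rfl, by positivity⟩
  -- in `(n * k).divisorsAntidiagonal`, every `(d, e) ≠ (n, k)` has `d < n` or `e < k`
  have hrest : ∑ x ∈ (n * k).divisorsAntidiagonal.erase (n, k), a x.1 * c x.2 =
      ∑ x ∈ (n * k).divisorsAntidiagonal.erase (n, k), b x.1 * c x.2 := by
    refine sum_congr rfl fun x hx => ?_
    obtain ⟨hxnk, hx⟩ := mem_erase.1 hx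
    obtain ⟨hmul, -⟩ := Nat.mem_divisorsAntidiagonal.1 hx
    rcases lt_trichotomy x.1 n with hlt | hx1 | hgt
    · rw [ih _ hlt (Nat.pos_of_ne_zero fun h0 => by simp [h0] at hmul; omega)]
    · rw [hx1] at hmul
      exact absurd (Prod.ext hx1 (Nat.eq_of_mul_eq_mul_left hn hmul)) hxnk
    · rw [hc _ (lt_of_not_ge fun hle => by nlinarith), mul_zero, mul_zero]
  have heq := h (n * k) (by positivity)
  rw [← add_sum_erase _ _ hnk, ← add_sum_erase _ _ hnk, hrest] at heq
  exact Nat.eq_of_mul_eq_mul_right (Nat.pos_of_ne_zero hck) (Nat.add_right_cancel heq)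

section StrongProdComponents

variable {G : SimpleGraph V} {H : SimpleGraph W}

lemma strongProd_reachable_iff {p q : V × W} :
    (strongProd G H).Reachable p q ↔ G.Reachable p.1 q.1 ∧ H.Reachable p.2 q.2 := by
  have hproj := isWeakHom_strongProd_iff.1 (Hom.id : strongProd G H →g _).isWeakHom
  refine ⟨fun h => ⟨hproj.1.reachable h, hproj.2.reachable h⟩, fun h => ?_⟩
  refine (reachable_boxProd.2 h).mono fun x y hxy => ?_
  rcases boxProd_adj.1 hxy with ⟨hG, he⟩ | ⟨hH, he⟩
  exacts [Or.inr (Or.inl ⟨hG, he⟩), Or.inl ⟨he, hH⟩]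

def strongProdComponentEquiv :
    (strongProd G H).ConnectedComponent ≃ G.ConnectedComponent × H.ConnectedComponent where
  toFun := Quot.lift (fun p => (G.connectedComponentMk p.1, H.connectedComponentMk p.2))
    fun _ _ h => Prod.ext (ConnectedComponent.sound (strongProd_reachable_iff.1 h).1)
      (ConnectedComponent.sound (strongProd_reachable_iff.1 h).2)
  invFun c := Quot.map₂ Prod.mk
    (fun a _ _ h => strongProd_reachable_iff.2 ⟨Reachable.refl a, h⟩)
    (fun _ _ b h => strongProd_reachable_iff.2 ⟨h, Reachable.refl b⟩) c.1 c.2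
  left_inv := by rintro ⟨p⟩; rfl
  right_inv := by rintro ⟨⟨a⟩, ⟨b⟩⟩; rfl

lemma supp_strongProdComponentEquiv_symm (c : G.ConnectedComponent) (d : H.ConnectedComponent) :
    (strongProdComponentEquiv.symm (c, d)).supp = c.supp ×ˢ d.supp := by
  induction c using ConnectedComponent.ind
  induction d using ConnectedComponent.ind
  ext p
  show (strongProd G H).connectedComponentMk p = (strongProd G H).connectedComponentMk (_, _) ↔ _
  simp only [ConnectedComponent.eq, Set.mem_prod, ConnectedComponent.mem_supp_iff]
  exact strongProd_reachable_iff

def induceProdIso (s : Set V) (t : Set W) :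
    (strongProd G H).induce (s ×ˢ t) ≃g strongProd (G.induce s) (H.induce t) where
  toEquiv := Equiv.Set.prod s t
  map_rel_iff' := by
    rintro ⟨⟨a, b⟩, _⟩ ⟨⟨a', b'⟩, _⟩
    simp only [strongProd, comap_adj, Function.Embedding.coe_subtype, Subtype.ext_iff]
    exact Iff.rfl

lemma nat_card_supp_strongProdComponentEquiv_symm (c : G.ConnectedComponent)
    (d : H.ConnectedComponent) :
    Nat.card (strongProdComponentEquiv.symm (c, d)).supp = Nat.card c.supp * Nat.card d.supp := by
  rw [supp_strongProdComponentEquiv_symm, Nat.card_congr (Equiv.Set.prod _ _), Nat.card_prod]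

lemma weakHomCount_induce_supp_strongProdComponentEquiv_symm (X : SimpleGraph U)
    (c : G.ConnectedComponent) (d : H.ConnectedComponent) :
    weakHomCount X ((strongProd G H).induce (strongProdComponentEquiv.symm (c, d)).supp) =
      weakHomCount X (G.induce c.supp) * weakHomCount X (H.induce d.supp) := by
  rw [supp_strongProdComponentEquiv_symm, weakHomCount_congr Iso.refl (induceProdIso _ _),
    weakHomCount_strongProd]

end StrongProdComponents

def SimpleGraph.Iso.induceSupp {G : SimpleGraph V} {H : SimpleGraph W} (φ : G ≃g H)
    (c : G.ConnectedComponent) :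
    G.induce c.supp ≃g H.induce (φ.connectedComponentEquiv c).supp where
  toEquiv := ConnectedComponent.isoEquivSupp φ c
  map_rel_iff' := φ.map_adj_iff

noncomputable def componentWeakHomCount (X : SimpleGraph U) (G : SimpleGraph V) (m : ℕ) : ℕ :=
  ∑ᶠ c ∈ {c : G.ConnectedComponent | Nat.card c.supp = m}, weakHomCount X (G.induce c.supp)

section ComponentWeakHomCount

variable {G : SimpleGraph V} {H : SimpleGraph W} (X : SimpleGraph U)

lemma componentWeakHomCount_congr (φ : G ≃g H) (m : ℕ) :
    componentWeakHomCount X G m = componentWeakHomCount X H m :=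
  finsum_mem_eq_of_bijOn _
    (φ.connectedComponentEquiv.bijOn fun c => by
      simp only [Set.mem_ofPred_eq, ← Nat.card_congr (ConnectedComponent.isoEquivSupp φ c)])
    fun c _ => weakHomCount_congr Iso.refl (φ.induceSupp c)

lemma componentWeakHomCount_strongProd
    (hG : ∀ m, {c : G.ConnectedComponent | Nat.card c.supp = m}.Finite)
    (hH : ∀ m, {c : H.ConnectedComponent | Nat.card c.supp = m}.Finite) {m : ℕ} (hm : 0 < m) :
    componentWeakHomCount X (strongProd G H) m = ∑ x ∈ m.divisorsAntidiagonal,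
      componentWeakHomCount X G x.1 * componentWeakHomCount X H x.2 := by
  classical
  let T := m.divisorsAntidiagonal.biUnion fun x => (hG x.1).toFinset ×ˢ (hH x.2).toFinset
  have hT : ∀ p : G.ConnectedComponent × H.ConnectedComponent,
      p ∈ T ↔ Nat.card p.1.supp * Nat.card p.2.supp = m := by
    simp [T, Nat.mem_divisorsAntidiagonal, hm.ne']
  have hdisj : (m.divisorsAntidiagonal : Set (ℕ × ℕ)).PairwiseDisjoint
      fun x => (hG x.1).toFinset ×ˢ (hH x.2).toFinset := by
    intro x _ y _ hxy
    simp only [Function.onFun, Finset.disjoint_left, Finset.mem_product, Set.Finite.mem_toFinset,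
      Set.mem_ofPred_eq]
    exact fun p hx hy => hxy (Prod.ext (hx.1.symm.trans hy.1) (hx.2.symm.trans hy.2))
  simp only [componentWeakHomCount, finsum_mem_eq_finite_toFinset_sum _ (hG _),
    finsum_mem_eq_finite_toFinset_sum _ (hH _), sum_mul_sum, ← sum_product']
  rw [← sum_biUnion hdisj, ← finsum_mem_coe_finset]
  refine finsum_mem_eq_of_bijOn _ (strongProdComponentEquiv.bijOn fun d => ?_) fun d _ => ?_
  · rw [Finset.mem_coe, hT, Set.mem_ofPred_eq, ← nat_card_supp_strongProdComponentEquiv_symm,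
      Equiv.symm_apply_apply]
  · conv_lhs => rw [← strongProdComponentEquiv.symm_apply_apply d]
    exact weakHomCount_induce_supp_strongProdComponentEquiv_symm X _ _

lemma componentWeakHomCount_pos [Finite U] {m : ℕ}
    (hG : {c : G.ConnectedComponent | Nat.card c.supp = m}.Finite) {c : G.ConnectedComponent}
    (hc : Nat.card c.supp = m) (hm : 0 < m) : 0 < componentWeakHomCount X G m := by
  have := Nat.finite_of_card_ne_zero (hc ▸ hm.ne')
  have := c.nonempty_supp.to_subtype
  rw [componentWeakHomCount, finsum_mem_eq_finite_toFinset_sum _ hG]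
  exact weakHomCount_pos.trans_le (single_le_sum (f := fun c => weakHomCount X (G.induce c.supp))
    (fun _ _ => Nat.zero_le _) ((Set.Finite.mem_toFinset hG).2 hc))

end ComponentWeakHomCount

section ComponentClass

variable {G : SimpleGraph V} {H : SimpleGraph W}

lemma nat_card_supp_pos (hfin : ∀ c : G.ConnectedComponent, c.supp.Finite)
    (c : G.ConnectedComponent) : 0 < Nat.card c.supp :=
  have := (hfin c).to_subtype
  have := c.nonempty_supp.to_subtype
  Nat.card_pos

noncomputable def componentClass (hfin : ∀ c : G.ConnectedComponent, c.supp.Finite)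
    (c : G.ConnectedComponent) : FinGraph :=
  have := (hfin c).to_subtype
  FinGraph.of (G.induce c.supp)

lemma componentClass_eq_iff (hGfin : ∀ c : G.ConnectedComponent, c.supp.Finite)
    (hHfin : ∀ c : H.ConnectedComponent, c.supp.Finite) {c : G.ConnectedComponent}
    {d : H.ConnectedComponent} :
    componentClass hGfin c = componentClass hHfin d ↔
      Nonempty (G.induce c.supp ≃g H.induce d.supp) :=
  have := (hGfin c).to_subtype
  have := (hHfin d).to_subtype
  FinGraph.of_eq_of_iff

lemma card_componentClass (hGfin : ∀ c : G.ConnectedComponent, c.supp.Finite)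
    (c : G.ConnectedComponent) :
    (componentClass hGfin c).card = Nat.card c.supp :=
  have := (hGfin c).to_subtype
  FinGraph.card_of _

lemma componentClass_ne_of_card_eq_zero (hGfin : ∀ c : G.ConnectedComponent, c.supp.Finite)
    (c : G.ConnectedComponent) {q : FinGraph} (hq : q.card = 0) : componentClass hGfin c ≠ q :=
  fun hc => (nat_card_supp_pos hGfin c).ne' (by rw [← card_componentClass hGfin, hc, hq])

lemma weakHomCount_graph_componentClass (hGfin : ∀ c : G.ConnectedComponent, c.supp.Finite)
    (X : SimpleGraph U) (c : G.ConnectedComponent) :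
    weakHomCount X (componentClass hGfin c).graph = weakHomCount X (G.induce c.supp) :=
  have := (hGfin c).to_subtype
  weakHomCount_congr Iso.refl (FinGraph.nonempty_iso_graph_of _).some

lemma finite_setOf_nat_card_supp_eq (hGfin : ∀ c : G.ConnectedComponent, c.supp.Finite)
    (hmult : ∀ c : G.ConnectedComponent,
      {c' : G.ConnectedComponent | Nonempty (G.induce c.supp ≃g G.induce c'.supp)}.Finite)
    (m : ℕ) : {c : G.ConnectedComponent | Nat.card c.supp = m}.Finite := by
  refine ((FinGraph.finite_setOf_card_eq m).biUnion
    (t := fun q => {c | componentClass hGfin c = q}) fun q _ => ?_).subset fun c hc =>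
    Set.mem_biUnion ((card_componentClass hGfin c).trans hc) rfl
  by_cases hq : ∃ c₀, componentClass hGfin c₀ = q
  · obtain ⟨c₀, rfl⟩ := hq
    exact (hmult c₀).subset fun c hc => (componentClass_eq_iff hGfin hGfin).1 hc.symm
  · exact Set.finite_empty.subset fun c hc => hq ⟨c, hc⟩

open Classical in
/-- The components of class `q` are among those with `q.card` vertices. -/
def componentClassFiberEquiv (hGfin : ∀ c : G.ConnectedComponent, c.supp.Finite)
    (hG : ∀ m, {c : G.ConnectedComponent | Nat.card c.supp = m}.Finite) (q : FinGraph) :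
    {c // componentClass hGfin c = q} ≃
      ((hG q.card).toFinset.filter fun c => q = componentClass hGfin c) :=
  Equiv.subtypeEquivRight fun c => by
    simp only [Finset.mem_filter, Set.Finite.mem_toFinset, Set.mem_ofPred_eq, eq_comm (a := q),
      iff_and_self]
    exact fun hc => hc ▸ (card_componentClass hGfin c).symm

end ComponentClass

def SimpleGraph.Iso.ofComponents {G : SimpleGraph V} {H : SimpleGraph W}
    (E : G.ConnectedComponent ≃ H.ConnectedComponent)
    (ι : ∀ c, G.induce c.supp ≃g H.induce (E c).supp) : G ≃g H where
  toEquiv := (Equiv.sigmaFiberEquiv G.connectedComponentMk).symm.trans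
    ((Equiv.sigmaCongr E fun c => (ι c).toEquiv).trans
      (Equiv.sigmaFiberEquiv H.connectedComponentMk))
  map_rel_iff' {v w} := by
    have hι : ∀ {c} (v) (hv : G.connectedComponentMk v = c),
        (ι (G.connectedComponentMk v) ⟨v, rfl⟩ : W) = ι c ⟨v, hv⟩ := by
      rintro _ v rfl
      rfl
    have hmk : ∀ v, H.connectedComponentMk (ι (G.connectedComponentMk v) ⟨v, rfl⟩ : W) =
        E (G.connectedComponentMk v) := fun v => (ι _ ⟨v, rfl⟩).2
    show H.Adj (ι _ ⟨v, rfl⟩ : W) (ι _ ⟨w, rfl⟩) ↔ G.Adj v w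
    by_cases hvw : G.connectedComponentMk w = G.connectedComponentMk v
    · rw [hι w hvw]
      exact (ι _).map_adj_iff
    · refine iff_of_false (fun h => hvw (E.injective ?_).symm)
        fun h => hvw (ConnectedComponent.sound h.reachable).symm
      exact (hmk v).symm.trans ((ConnectedComponent.sound h.reachable).trans (hmk w))

section Reconstruction

variable {G : SimpleGraph V} {H : SimpleGraph W}

lemma nonempty_iso_of_forall_nonempty_equiv (hGfin : ∀ c : G.ConnectedComponent, c.supp.Finite)
    (hHfin : ∀ c : H.ConnectedComponent, c.supp.Finite)
    (h : ∀ q, Nonempty ({c // componentClass hGfin c = q} ≃ {d // componentClass hHfin d = q})) :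
    Nonempty (G ≃g H) := by
  let E := (Equiv.sigmaFiberEquiv (componentClass hGfin)).symm.trans
    ((Equiv.sigmaCongrRight fun q => (h q).some).trans
      (Equiv.sigmaFiberEquiv (componentClass hHfin)))
  have hE : ∀ c, componentClass hHfin (E c) = componentClass hGfin c :=
    fun c => ((h _).some ⟨c, rfl⟩).2
  exact ⟨Iso.ofComponents E fun c => ((componentClass_eq_iff hGfin hHfin).1 (hE c).symm).some⟩

theorem nonempty_iso_of_componentWeakHomCount_eq
    (hGfin : ∀ c : G.ConnectedComponent, c.supp.Finite)
    (hHfin : ∀ c : H.ConnectedComponent, c.supp.Finite)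
    (hG : ∀ m, {c : G.ConnectedComponent | Nat.card c.supp = m}.Finite)
    (hH : ∀ m, {c : H.ConnectedComponent | Nat.card c.supp = m}.Finite)
    (h : ∀ n, 0 < n → ∀ (U : Type) [Finite U] (X : SimpleGraph U),
      componentWeakHomCount X G n = componentWeakHomCount X H n) :
    Nonempty (G ≃g H) := by
  classical
  refine nonempty_iso_of_forall_nonempty_equiv hGfin hHfin fun q => ?_
  rcases q.card.eq_zero_or_pos with hq | hq
  · have : IsEmpty {c // componentClass hGfin c = q} :=
      ⟨fun c => componentClass_ne_of_card_eq_zero hGfin c.1 hq c.2⟩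
    have : IsEmpty {d // componentClass hHfin d = q} :=
      ⟨fun d => componentClass_ne_of_card_eq_zero hHfin d.1 hq d.2⟩
    exact ⟨Equiv.equivOfIsEmpty _ _⟩
  refine ⟨(componentClassFiberEquiv hGfin hG q).trans
    ((Finset.equivOfCardEq ?_).trans (componentClassFiberEquiv hHfin hH q).symm)⟩
  have hM : (hG q.card).toFinset.val.map (componentClass hGfin) =
      (hH q.card).toFinset.val.map (componentClass hHfin) := by
    refine FinGraph.eq_of_sum_weakHomCount_eq fun U _ X => ?_
    simp only [Multiset.map_map, comp_def, weakHomCount_graph_componentClass, Finset.sum_map_val]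
    rw [← finsum_mem_eq_finite_toFinset_sum, ← finsum_mem_eq_finite_toFinset_sum]
    exact h _ hq U X
  have hcount := congrArg (Multiset.count q) hM
  rwa [Multiset.count_map, Multiset.count_map, ← Finset.filter_val, ← Finset.filter_val,
    Finset.card_val, Finset.card_val] at hcount

end Reconstruction

theorem stmt17_general {α β γ : Type}
    (A : SimpleGraph α) (B : SimpleGraph β) (C : SimpleGraph γ)
    (hAfin : ∀ c : A.ConnectedComponent, c.supp.Finite)
    (hBfin : ∀ c : B.ConnectedComponent, c.supp.Finite)
    (hCfin : ∀ c : C.ConnectedComponent, c.supp.Finite)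
    (hAmult : ∀ c : A.ConnectedComponent,
      {c' : A.ConnectedComponent |
        Nonempty (A.induce c.supp ≃g A.induce c'.supp)}.Finite)
    (hBmult : ∀ c : B.ConnectedComponent,
      {c' : B.ConnectedComponent |
        Nonempty (B.induce c.supp ≃g B.induce c'.supp)}.Finite)
    (hCmult : ∀ c : C.ConnectedComponent,
      {c' : C.ConnectedComponent |
        Nonempty (C.induce c.supp ≃g C.induce c'.supp)}.Finite)
    (hCne : Nonempty γ)
    (h : Nonempty (strongProd A C ≃g strongProd B C)) :
    Nonempty (A ≃g B) := by
  classical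
  obtain ⟨φ⟩ := h
  have hA := finite_setOf_nat_card_supp_eq hAfin hAmult
  have hB := finite_setOf_nat_card_supp_eq hBfin hBmult
  have hC := finite_setOf_nat_card_supp_eq hCfin hCmult
  have hk : ∃ k, ∃ c : C.ConnectedComponent, Nat.card c.supp = k :=
    ⟨_, C.connectedComponentMk hCne.some, rfl⟩
  obtain ⟨c₀, hc₀⟩ := Nat.find_spec hk
  have hkpos : 0 < Nat.find hk := hc₀ ▸ nat_card_supp_pos hCfin c₀
  refine nonempty_iso_of_componentWeakHomCount_eq hAfin hBfin hA hB fun n hn U _ X => ?_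
  refine eq_of_sum_divisorsAntidiagonal_mul_eq hkpos (fun e he => ?_)
    (componentWeakHomCount_pos X (hC _) hc₀ hkpos).ne' (fun m hm => ?_) hn
  · exact finsum_mem_eq_zero_of_forall_eq_zero fun c hc =>
      absurd he (not_lt.2 (Nat.find_min' hk ⟨c, hc⟩))
  · rw [← componentWeakHomCount_strongProd X hA hC hm,
      ← componentWeakHomCount_strongProd X hB hC hm, componentWeakHomCount_congr X φ]

/-- cancellation for the strong product. If `A`, `B`, `C` are countable
simple graphs in which every connected component is finite and every isomorphism class
of components occurs only finitely often, `C` is nonempty, and `A ⊠ C ≅ B ⊠ C`, then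
`A ≅ B`. -/
theorem stmt17 {α β γ : Type} [Countable α] [Countable β] [Countable γ]
    (A : SimpleGraph α) (B : SimpleGraph β) (C : SimpleGraph γ)
    (hAfin : ∀ c : A.ConnectedComponent, c.supp.Finite)
    (hBfin : ∀ c : B.ConnectedComponent, c.supp.Finite)
    (hCfin : ∀ c : C.ConnectedComponent, c.supp.Finite)
    (hAmult : ∀ c : A.ConnectedComponent,
      {c' : A.ConnectedComponent |
        Nonempty (A.induce c.supp ≃g A.induce c'.supp)}.Finite)
    (hBmult : ∀ c : B.ConnectedComponent,
      {c' : B.ConnectedComponent |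
        Nonempty (B.induce c.supp ≃g B.induce c'.supp)}.Finite)
    (hCmult : ∀ c : C.ConnectedComponent,
      {c' : C.ConnectedComponent |
        Nonempty (C.induce c.supp ≃g C.induce c'.supp)}.Finite)
    (hCne : Nonempty γ)
    (h : Nonempty (strongProd A C ≃g strongProd B C)) :
    Nonempty (A ≃g B) :=
  stmt17_general A B C hAfin hBfin hCfin hAmult hBmult hCmult hCne h
end

section
/- Let G be a finite connected simple graph with at least two vertices. For a sequence a = (a_n)_{n ≥ 2} of positive integers, let H_a be the simple graph that is the disjoint union of countably infinitely many copies of G together with, for each n ≥ 2, exactly a_n copies of the n-fold Cartesian (box) product G □ G □ ⋯ □ G (n factors). Then for any two sequences a = (a_n)_{n ≥ 2} and b = (b_n)_{n ≥ 2} of positive integers, the box products H_a □ H_a and H_b □ H_b are isomorphic; yet if a ≠ b then H_a is not isomorphic to H_b. In particular, the unique square root property fails for the Cartesian product of countable graphs once connected components are allowed to occur with infinite multiplicity. -/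
/-- Vertex type of the `(n+1)`-fold box product of a graph on `α` with itself. -/
def BoxPowType (α : Type) : ℕ → Type
  | 0 => α
  | n + 1 => α × BoxPowType α n

/-- The `(n+1)`-fold Cartesian (box) product `G □ G □ ⋯ □ G`. -/
def boxPow {α : Type} (G : SimpleGraph α) : (n : ℕ) → SimpleGraph (BoxPowType α n)
  | 0 => G
  | n + 1 => G.boxProd (boxPow G n)

/-- The disjoint union of a family of simple graphs, on the sigma type of the vertex
types: edges are exactly the edges within each summand. -/
def sigmaGraph {ι : Type} {V : ι → Type} (G : ∀ i, SimpleGraph (V i)) :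
    SimpleGraph (Σ i, V i) where
  Adj p q := ∃ h : p.1 = q.1, (G q.1).Adj (h ▸ p.2) q.2
  symm := by
    constructor
    rintro ⟨i, v⟩ ⟨j, w⟩ ⟨h, hadj⟩
    obtain rfl : i = j := h
    exact ⟨rfl, hadj.symm⟩
  loopless := by
    constructor
    rintro ⟨i, v⟩ ⟨h, hadj⟩
    exact (G i).loopless.irrefl v hadj

/-- Index type for the graph `H_a`: one index in `Sum.inl` for each of the countably
many copies of `G`, and, for each `n : ℕ`, indices `Sum.inr ⟨n, k⟩`, `k < a n`, for
the `a n` copies of the `(n+2)`-fold box power of `G` (so `a n` plays the role of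
`a_{n+2}` of the sequence `(a_m)_{m ≥ 2}`). -/
def HIdx (a : ℕ → ℕ) : Type := ℕ ⊕ (Σ n : ℕ, Fin (a n))

/-- Vertex types of the components of `H_a`. -/
def HType (α : Type) (a : ℕ → ℕ) : HIdx a → Type
  | Sum.inl _ => α
  | Sum.inr ⟨n, _⟩ => BoxPowType α (n + 1)

/-- The family of components of `H_a`: copies of `G` and, for each `n`, `a n` copies of
the `(n+2)`-fold box power of `G`. -/
def HFam {α : Type} (G : SimpleGraph α) (a : ℕ → ℕ) :
    ∀ i : HIdx a, SimpleGraph (HType α a i)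
  | Sum.inl _ => G
  | Sum.inr ⟨n, _⟩ => boxPow G (n + 1)

/-- The graph `H_a`: the disjoint union of countably infinitely many copies of `G`
together with, for each `n ≥ 2`, exactly `a_n` copies of the `n`-fold box power of `G`
(here `a : ℕ → ℕ` with `a k` encoding `a_{k+2}`). -/
def HGraph {α : Type} (G : SimpleGraph α) (a : ℕ → ℕ) :
    SimpleGraph (Σ i, HType α a i) :=
  sigmaGraph (HFam G a)

/-!
Every component of `H_a □ H_a` is a box power `G^k` with `k ≥ 2`, and each such power occurs
countably infinitely often, already as `G □ G^(k-1)` for the infinitely many copies of `G`.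
So the components of `H_a □ H_a` and `H_b □ H_b` can be matched up whatever `a` and `b` are.
Conversely, an isomorphism of disjoint unions of connected graphs matches up their components,
and since `G^n` has `|G|^n` vertices with `|G| ≥ 2`, it preserves the number of factors of
each component; counting the components with `n` factors recovers `a_n`.
-/

open SimpleGraph

section BoxPow

variable {α : Type}

instance BoxPowType.instFintype [Fintype α] : ∀ n, Fintype (BoxPowType α n)
  | 0 => inferInstanceAs (Fintype α)
  | n + 1 => @instFintypeProd α (BoxPowType α n) _ (BoxPowType.instFintype n)

lemma BoxPowType.card [Fintype α] :
    ∀ n, Fintype.card (BoxPowType α n) = Fintype.card α ^ (n + 1)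
  | 0 => (pow_one _).symm
  | n + 1 => by
    change Fintype.card (α × BoxPowType α n) = _
    rw [Fintype.card_prod, BoxPowType.card n]
    ring

lemma boxPow_connected {G : SimpleGraph α} (hG : G.Connected) : ∀ n, (boxPow G n).Connected
  | 0 => hG
  | n + 1 => hG.boxProd (boxPow_connected hG n)

def SimpleGraph.Iso.boxProdCongr {α₁ α₂ β₁ β₂ : Type} {G₁ : SimpleGraph α₁}
    {G₂ : SimpleGraph α₂} {H₁ : SimpleGraph β₁} {H₂ : SimpleGraph β₂}
    (e₁ : G₁ ≃g G₂) (e₂ : H₁ ≃g H₂) : G₁.boxProd H₁ ≃g G₂.boxProd H₂ where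
  toEquiv := e₁.toEquiv.prodCongr e₂.toEquiv
  map_rel_iff' := by
    rintro ⟨u, v⟩ ⟨u', v'⟩
    simp only [Equiv.prodCongr_apply, boxProd_adj, Prod.map_fst, Prod.map_snd]
    exact or_congr (and_congr e₁.map_rel_iff e₂.toEquiv.injective.eq_iff)
      (and_congr e₂.map_rel_iff e₁.toEquiv.injective.eq_iff)

def boxPowCongr (G : SimpleGraph α) {m n : ℕ} (h : m = n) : boxPow G m ≃g boxPow G n :=
  h ▸ Iso.refl

def boxPowAddIso (G : SimpleGraph α) : ∀ m n : ℕ,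
    (boxPow G m).boxProd (boxPow G n) ≃g boxPow G (m + n + 1)
  | 0, n => boxPowCongr G (show n + 1 = 0 + n + 1 by omega)
  | m + 1, n =>
    (G.boxProdAssoc (boxPow G m) (boxPow G n)).trans <|
      (Iso.refl.boxProdCongr (boxPowAddIso G m n)).trans
        (boxPowCongr G (show m + n + 1 + 1 = m + 1 + n + 1 by omega))

end BoxPow

section SigmaGraph

variable {ι κ : Type} {V : ι → Type} {W : κ → Type}
  {G : ∀ i, SimpleGraph (V i)} {H : ∀ j, SimpleGraph (W j)}

lemma sigmaGraph_reachable_mk {i : ι} {v w : V i} (h : (G i).Reachable v w) :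
    (sigmaGraph G).Reachable ⟨i, v⟩ ⟨i, w⟩ :=
  h.map (⟨fun v => ⟨i, v⟩, fun h => ⟨rfl, h⟩⟩ : G i →g sigmaGraph G)

lemma sigmaGraph_reachable_fst_eq {p q : Σ i, V i} (h : (sigmaGraph G).Reachable p q) :
    p.1 = q.1 := by
  obtain ⟨w⟩ := h
  induction w with
  | nil => rfl
  | cons hadj _ ih => exact hadj.1.trans ih

def sigmaGraphCongr (e : ι ≃ κ) (f : ∀ i, G i ≃g H (e i)) :
    sigmaGraph G ≃g sigmaGraph H where
  toEquiv := e.sigmaCongr fun i => (f i).toEquiv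
  map_rel_iff' := by
    rintro ⟨i, v⟩ ⟨j, w⟩
    change (sigmaGraph H).Adj ⟨e i, f i v⟩ ⟨e j, f j w⟩ ↔ _
    constructor
    · rintro ⟨h, hadj⟩
      obtain rfl : i = j := e.injective h
      exact ⟨rfl, (f i).map_rel_iff.mp hadj⟩
    · rintro ⟨h, hadj⟩
      obtain rfl : i = j := h
      exact ⟨rfl, (f i).map_rel_iff.mpr hadj⟩

variable (G H) in
def boxProdSigmaGraphIso :
    (sigmaGraph G).boxProd (sigmaGraph H) ≃g
      sigmaGraph fun p : ι × κ => (G p.1).boxProd (H p.2) where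
  toFun x := ⟨(x.1.1, x.2.1), (x.1.2, x.2.2)⟩
  invFun x := (⟨x.1.1, x.2.1⟩, ⟨x.1.2, x.2.2⟩)
  left_inv _ := rfl
  right_inv _ := rfl
  map_rel_iff' := by
    rintro ⟨⟨i, v⟩, ⟨j, w⟩⟩ ⟨⟨i', v'⟩, ⟨j', w'⟩⟩
    change (sigmaGraph fun p : ι × κ => (G p.1).boxProd (H p.2)).Adj ⟨(i, j), (v, w)⟩
        ⟨(i', j'), (v', w')⟩ ↔ ((sigmaGraph G).boxProd (sigmaGraph H)).Adj (⟨i, v⟩, ⟨j, w⟩)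
        (⟨i', v'⟩, ⟨j', w'⟩)
    constructor
    · rintro ⟨h, hadj⟩
      obtain ⟨rfl, rfl⟩ := Prod.ext_iff.mp h
      rcases hadj with ⟨hG, rfl : w = w'⟩ | ⟨hH, rfl : v = v'⟩
      · exact Or.inl ⟨⟨rfl, hG⟩, rfl⟩
      · exact Or.inr ⟨⟨rfl, hH⟩, rfl⟩
    · rintro (⟨⟨h', hG⟩, h⟩ | ⟨⟨h', hH⟩, h⟩)
      · obtain rfl : i = i' := h'
        obtain ⟨rfl, hw⟩ := Sigma.mk.inj_iff.mp h
        obtain rfl := eq_of_heq hw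
        exact ⟨rfl, Or.inl ⟨hG, rfl⟩⟩
      · obtain rfl : j = j' := h'
        obtain ⟨rfl, hv⟩ := Sigma.mk.inj_iff.mp h
        obtain rfl := eq_of_heq hv
        exact ⟨rfl, Or.inr ⟨hH, rfl⟩⟩

lemma SimpleGraph.Iso.sigmaGraph_fst_eq (hG : ∀ i, (G i).Connected)
    (φ : sigmaGraph G ≃g sigmaGraph H) {p q : Σ i, V i} (h : p.1 = q.1) : (φ p).1 = (φ q).1 := by
  obtain ⟨i, v⟩ := p
  obtain ⟨j, w⟩ := q
  obtain rfl : i = j := h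
  exact sigmaGraph_reachable_fst_eq
    ((sigmaGraph_reachable_mk ((hG i).preconnected v w)).map φ.toHom)

lemma SimpleGraph.Iso.exists_equiv_of_sigmaGraph (hG : ∀ i, (G i).Connected)
    (hH : ∀ j, (H j).Connected) (φ : sigmaGraph G ≃g sigmaGraph H) :
    ∃ e : ι ≃ κ, ∀ i, Nonempty (V i ≃ W (e i)) := by
  let pt (i : ι) : Σ i, V i := ⟨i, (hG i).nonempty.some⟩
  let pt' (j : κ) : Σ j, W j := ⟨j, (hH j).nonempty.some⟩
  have hφ (p : Σ i, V i) : (φ p).1 = (φ (pt p.1)).1 := φ.sigmaGraph_fst_eq hG rfl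
  have hφ' (q : Σ j, W j) : (φ.symm q).1 = (φ.symm (pt' q.1)).1 :=
    φ.symm.sigmaGraph_fst_eq hH rfl
  let e : ι ≃ κ :=
    { toFun i := (φ (pt i)).1
      invFun j := (φ.symm (pt' j)).1
      left_inv i := by
        simpa only [φ.symm_apply_apply] using (hφ' (φ (pt i))).symm
      right_inv j := by
        simpa only [φ.apply_symm_apply] using (hφ (φ.symm (pt' j))).symm }
  refine ⟨e, fun i => ⟨(Equiv.sigmaSubtype i).symm.trans <|
    (φ.toEquiv.subtypeEquiv fun p => ?_).trans (Equiv.sigmaSubtype (e i))⟩⟩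
  change p.1 = i ↔ (φ p).1 = e i
  rw [hφ p]
  exact ⟨fun h => h ▸ rfl, fun h => e.injective h⟩

end SigmaGraph

section BoxPowUnion

variable {α ι κ : Type} (G : SimpleGraph α)

def boxPowUnion (f : ι → ℕ) : SimpleGraph (Σ i, BoxPowType α (f i)) :=
  sigmaGraph fun i => boxPow G (f i)

def boxPowUnionCongr {f : ι → ℕ} {g : κ → ℕ} (e : ι ≃ κ) (he : ∀ i, g (e i) = f i) :
    boxPowUnion G f ≃g boxPowUnion G g :=
  sigmaGraphCongr e fun i => boxPowCongr G (he i).symm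

def boxProdBoxPowUnionIso (f : ι → ℕ) (g : κ → ℕ) :
    (boxPowUnion G f).boxProd (boxPowUnion G g) ≃g
      boxPowUnion G fun p : ι × κ => f p.1 + g p.2 + 1 :=
  (boxProdSigmaGraphIso _ _).trans <|
    sigmaGraphCongr (Equiv.refl _) fun p => boxPowAddIso G (f p.1) (g p.2)

variable {G} in
lemma exists_equiv_of_boxPowUnion_iso [Fintype α] (hG : G.Connected)
    (hcard : 2 ≤ Fintype.card α) {f : ι → ℕ} {g : κ → ℕ}
    (φ : boxPowUnion G f ≃g boxPowUnion G g) : ∃ e : ι ≃ κ, ∀ i, g (e i) = f i := by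
  obtain ⟨e, he⟩ := φ.exists_equiv_of_sigmaGraph (fun i => boxPow_connected hG (f i))
    (fun j => boxPow_connected hG (g j))
  refine ⟨e, fun i => ?_⟩
  have hvert := Fintype.card_congr (he i).some
  rw [BoxPowType.card, BoxPowType.card] at hvert
  have := Nat.pow_right_injective hcard hvert
  omega

end BoxPowUnion

lemma exists_equiv_forall_eq_of_infinite_fibers {α β γ : Type} [Countable α] [Countable β]
    {f : α → γ} {g : β → γ} (hf : ∀ c, Infinite {x // f x = c})
    (hg : ∀ c, Infinite {y // g y = c}) : ∃ e : α ≃ β, ∀ x, g (e x) = f x := by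
  have fiberEquiv (c : γ) : Nonempty ({x // f x = c} ≃ {y // g y = c}) := by
    have := hf c
    have := hg c
    exact Cardinal.eq.mp (by rw [Cardinal.mk_eq_aleph0, Cardinal.mk_eq_aleph0])
  exact ⟨Equiv.ofFiberEquiv fun c => (fiberEquiv c).some, Equiv.ofFiberEquiv_map _⟩

namespace HIdx

variable {a b : ℕ → ℕ}

instance : Countable (HIdx a) := by
  unfold HIdx
  infer_instance

/-- `boxPow G n` has `n + 1` factors; the component at `i` is `boxPow G i.exponent`. -/
def exponent : HIdx a → ℕ
  | Sum.inl _ => 0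
  | Sum.inr ⟨n, _⟩ => n + 1

def ofExponent (ha : ∀ n, 0 < a n) : ℕ → HIdx a
  | 0 => Sum.inl 0
  | n + 1 => Sum.inr ⟨n, ⟨0, ha n⟩⟩

lemma exponent_ofExponent (ha : ∀ n, 0 < a n) : ∀ n, (ofExponent ha n).exponent = n
  | 0 => rfl
  | _ + 1 => rfl

lemma infinite_fiber_exponent_add (ha : ∀ n, 0 < a n) (m : ℕ) :
    Infinite {p : HIdx a × HIdx a // p.1.exponent + p.2.exponent = m} :=
  Infinite.of_injective
    (fun k => ⟨(Sum.inl k, ofExponent ha m), (zero_add _).trans (exponent_ofExponent ha m)⟩)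
    fun _ _ h => Sum.inl_injective (congrArg (fun p => p.1.1) h)

def fiberExponentEquiv (n : ℕ) : {i : HIdx a // i.exponent = n + 1} ≃ Fin (a n) where
  toFun
    | ⟨Sum.inl _, h⟩ => absurd h (by simp [exponent])
    | ⟨Sum.inr ⟨m, k⟩, h⟩ => Fin.cast (congrArg a (Nat.succ_injective h)) k
  invFun k := ⟨Sum.inr ⟨n, k⟩, rfl⟩
  left_inv := by
    rintro ⟨_ | ⟨m, k⟩, h⟩
    · exact absurd h (by simp [exponent])
    · obtain rfl : m = n := Nat.succ_injective h
      rfl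
  right_inv _ := rfl

lemma eq_of_equiv_exponent (e : HIdx a ≃ HIdx b) (he : ∀ i, (e i).exponent = i.exponent) :
    a = b := by
  funext n
  simpa using Fintype.card_congr <| (fiberExponentEquiv n).symm.trans <|
    (e.subtypeEquiv fun i => by rw [he i]).trans (fiberExponentEquiv n)

end HIdx

def HGraph.isoBoxPowUnion {α : Type} (G : SimpleGraph α) (a : ℕ → ℕ) :
    HGraph G a ≃g boxPowUnion G (HIdx.exponent (a := a)) :=
  sigmaGraphCongr (Equiv.refl _) fun
    | Sum.inl _ => Iso.refl
    | Sum.inr _ => Iso.refl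

/-- failure of the unique square root property for the box product of
countable graphs with components of infinite multiplicity. Let `G` be a finite connected
simple graph with at least two vertices. For any two sequences `a`, `b` of positive
integers, the box squares `H_a □ H_a` and `H_b □ H_b` are isomorphic, yet if `a ≠ b`
then `H_a` is not isomorphic to `H_b`. -/
theorem stmt19 {α : Type} [Fintype α] (G : SimpleGraph α)
    (hconn : G.Connected) (hcard : 2 ≤ Fintype.card α)
    (a b : ℕ → ℕ) (ha : ∀ n, 0 < a n) (hb : ∀ n, 0 < b n) :
    Nonempty ((HGraph G a).boxProd (HGraph G a) ≃g (HGraph G b).boxProd (HGraph G b)) ∧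
      (a ≠ b → ¬ Nonempty (HGraph G a ≃g HGraph G b)) := by
  have square (c : ℕ → ℕ) : (HGraph G c).boxProd (HGraph G c) ≃g
      boxPowUnion G fun p : HIdx c × HIdx c => p.1.exponent + p.2.exponent + 1 :=
    ((HGraph.isoBoxPowUnion G c).boxProdCongr (HGraph.isoBoxPowUnion G c)).trans
      (boxProdBoxPowUnionIso G _ _)
  refine ⟨?_, fun hne ⟨φ⟩ => hne ?_⟩
  · obtain ⟨e, he⟩ := exists_equiv_forall_eq_of_infinite_fibers
      (HIdx.infinite_fiber_exponent_add ha) (HIdx.infinite_fiber_exponent_add hb)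
    exact ⟨(square a).trans <|
      (boxPowUnionCongr G e fun p => congrArg (· + 1) (he p)).trans (square b).symm⟩
  · obtain ⟨e, he⟩ := exists_equiv_of_boxPowUnion_iso hconn hcard <|
      (HGraph.isoBoxPowUnion G a).symm.trans (φ.trans (HGraph.isoBoxPowUnion G b))
    exact HIdx.eq_of_equiv_exponent e he
end
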